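/- arXiv:1702.03802 — 8 statements merged into one kernel-verified Lean document; each statement's English description precedes it below -/
import Mathlib

section
/- Let n ≥ 1, let K be an n×n real matrix, and let μ : {0,1}^n → ℝ be any function. Then the following are equivalent: (i) for every subset S ⊆ {1,…,n}, the sum of μ(x) over all x ∈ {0,1}^n with x_i = 1 for all i ∈ S equals det(K_S^S), the principal minor of K on rows and columns indexed by S; (ii) for every x ∈ {0,1}^n, μ(x) = (−1)^{n−|x|} · det(K − X), where X is the diagonal matrix with diagonal entries 1−x_1, …, 1−x_n and |x| = x_1 + ⋯ + x_n. -/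
/-!
Identify `{0,1}^n` with the subsets of `Fin n` and write `p S` for the principal minor of `K` on
`S`. Condition (i) says that the sum of `μ` over the supersets of `S` is `p S`; by Möbius inversion
on the Boolean lattice this holds iff `μ U = ∑_{T ⊇ U} (-1)^|T \ U| p T` for all `U`. Expanding
`det (K - X)` multilinearly in its rows, where row `i ∉ U` is the sum of row `i` of `K` and `-eᵢ`,
shows that `(-1)^(n - |U|) det (K - X)` is exactly this alternating sum.
-/

open Finset

namespace Finset

variable {α R : Type*} [Fintype α] [DecidableEq α] [CommRing R]

def upperZeta (f : Finset α → R) (s : Finset α) : R := ∑ t ∈ Ici s, f t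

def upperMoebius (f : Finset α → R) (s : Finset α) : R := ∑ t ∈ Ici s, (-1) ^ #(t \ s) * f t

omit [Fintype α] in
theorem sum_Icc_neg_one_pow_card_sdiff_left (s u : Finset α) :
    ∑ t ∈ Icc s u, ((-1 : R) ^ #(t \ s)) = if s = u then 1 else 0 := by
  by_cases hsu : s ⊆ u
  · have hpowerset := congrArg (Int.cast : ℤ → R) (sum_powerset_neg_one_pow_card (x := u \ s))
    push_cast at hpowerset
    have hdisj : ∀ w ∈ (u \ s).powerset, Disjoint s w :=
      fun w hw => disjoint_sdiff.mono_right (mem_powerset.mp hw)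
    rw [Icc_eq_image_powerset hsu, sum_image fun v hv w hw hvw => by
      rw [← union_sdiff_cancel_left (hdisj v hv), ← union_sdiff_cancel_left (hdisj w hw)]
      exact congrArg (· \ s) hvw]
    rw [sum_congr rfl fun w hw => by rw [union_sdiff_cancel_left (hdisj w hw)], hpowerset]
    refine if_congr ?_ rfl rfl
    rw [sdiff_eq_empty_iff_subset]
    exact ⟨(subset_antisymm hsu ·), (· ▸ subset_rfl)⟩
  · rw [Icc_eq_empty (by simpa using hsu), sum_empty, if_neg (by rintro rfl; exact hsu subset_rfl)]

omit [Fintype α] in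
theorem sum_Icc_neg_one_pow_card_sdiff_right (s u : Finset α) :
    ∑ t ∈ Icc s u, ((-1 : R) ^ #(u \ t)) = if s = u then 1 else 0 := by
  calc ∑ t ∈ Icc s u, ((-1 : R) ^ #(u \ t))
      = ∑ t ∈ Icc s u, (-1) ^ #(u \ s) * (-1) ^ #(t \ s) := sum_congr rfl fun t ht => by
        obtain ⟨hst, htu⟩ := mem_Icc.mp ht
        have hcard : #(u \ s) = #(u \ t) + #(t \ s) := by
          have := card_sdiff_add_card_eq_card hst
          have := card_sdiff_add_card_eq_card htu
          have := card_sdiff_add_card_eq_card (hst.trans htu)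
          omega
        simp [hcard, pow_add, mul_assoc, ← mul_pow]
    _ = if s = u then 1 else 0 := by
        rw [← mul_sum, sum_Icc_neg_one_pow_card_sdiff_left]
        split_ifs with h <;> simp [h]

theorem sum_Ici_sum_Ici_comm (F : Finset α → Finset α → R) (s : Finset α) :
    ∑ t ∈ Ici s, ∑ u ∈ Ici t, F t u = ∑ u ∈ Ici s, ∑ t ∈ Icc s u, F t u :=
  sum_comm' fun t u => by
    simp only [mem_Ici, mem_Icc]
    exact ⟨fun h => ⟨⟨h.1, h.2⟩, h.1.trans h.2⟩, fun h => ⟨h.1.1, h.1.2⟩⟩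

theorem upperMoebius_upperZeta (f : Finset α → R) : upperMoebius (upperZeta f) = f := by
  ext s
  simp only [upperMoebius, upperZeta, mul_sum]
  rw [sum_Ici_sum_Ici_comm]
  simp [← sum_mul, sum_Icc_neg_one_pow_card_sdiff_left]

theorem upperZeta_upperMoebius (f : Finset α → R) : upperZeta (upperMoebius f) = f := by
  ext s
  simp only [upperMoebius, upperZeta]
  rw [sum_Ici_sum_Ici_comm]
  simp [← sum_mul, sum_Icc_neg_one_pow_card_sdiff_right]

theorem upperZeta_eq_iff_eq_upperMoebius (f g : Finset α → R) :
    upperZeta f = g ↔ f = upperMoebius g := by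
  constructor
  · rintro rfl; exact (upperMoebius_upperZeta f).symm
  · rintro rfl; exact upperZeta_upperMoebius g

end Finset

namespace Matrix

variable {n R : Type*} [Fintype n] [DecidableEq n] [CommRing R]

def principalMinor (A : Matrix n n R) (s : Finset n) : R :=
  (A.submatrix ((↑) : s → n) ((↑) : s → n)).det

theorem det_add_diagonal (A : Matrix n n R) (d : n → R) :
    (A + diagonal d).det = ∑ s : Finset n, (∏ i ∈ sᶜ, d i) * A.principalMinor s := by
  let D : (n → R) [⋀^n]→ₗ[R] R := detRowAlternating
  have hpiecewise (s : Finset n) :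
      s.piecewise A.row (fun i => d i • (1 : Matrix n n R).row i) =
        sᶜ.piecewise (fun i => d i • s.piecewise A.row (1 : Matrix n n R).row i)
          (s.piecewise A.row (1 : Matrix n n R).row) := by
    ext i : 1
    by_cases hi : i ∈ s <;> simp [hi]
  calc (A + diagonal d).det = D (A.row + fun i => d i • (1 : Matrix n n R).row i) := by
        congr 1
        ext i j
        simp [diagonal_apply, one_apply]
    _ = ∑ s : Finset n, D (s.piecewise A.row fun i => d i • (1 : Matrix n n R).row i) :=
        D.map_add_univ _ _
    _ = ∑ s : Finset n, (∏ i ∈ sᶜ, d i) * A.principalMinor s := by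
        refine sum_congr rfl fun s _ => ?_
        rw [hpiecewise, principalMinor, ← det_piecewise_one_eq_submatrix_det, ← smul_eq_mul]
        exact D.toMultilinearMap.map_piecewise_smul d _ sᶜ

theorem neg_one_pow_card_compl_mul_det_sub_diagonal (A : Matrix n n R) (s : Finset n) :
    (-1) ^ #sᶜ * (A - diagonal fun i => if i ∈ s then 0 else 1).det =
      upperMoebius A.principalMinor s := by
  have hprod (t : Finset n) :
      ∏ i ∈ tᶜ, (-(if i ∈ s then 0 else 1) : R) = if s ⊆ t then (-1) ^ #tᶜ else 0 := by
    have : ∀ i, (-(if i ∈ s then 0 else 1) : R) = if i ∉ s then -1 else 0 := fun i => by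
      split_ifs <;> simp_all
    simp only [this, prod_ite_zero, prod_const]
    refine if_congr ?_ rfl rfl
    simp only [mem_compl, subset_iff]
    exact forall_congr' fun i => not_imp_not
  have hsign {t : Finset n} (hst : s ⊆ t) : (-1 : R) ^ #sᶜ * (-1) ^ #tᶜ = (-1) ^ #(t \ s) := by
    have hcard : #sᶜ = #(t \ s) + #tᶜ := by
      have := card_sdiff_add_card_eq_card hst
      have := card_le_univ t
      simp only [card_compl]
      omega
    simp [hcard, pow_add, mul_assoc, ← mul_pow]
  rw [sub_eq_add_neg, diagonal_neg, det_add_diagonal, mul_sum, upperMoebius,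
    ← sum_filter_of_ne (p := (s ⊆ ·))]
  · refine sum_congr (by ext; simp) fun t ht => ?_
    have hst : s ⊆ t := mem_Ici.mp ht
    rw [hprod, if_pos hst, ← mul_assoc, hsign hst]
  · intro t _ hne
    by_contra hst
    rw [hprod, if_neg hst, zero_mul, mul_zero] at hne
    exact hne rfl

end Matrix

def boolFunEquivFinset (α : Type*) [Fintype α] [DecidableEq α] : (α → Bool) ≃ Finset α where
  toFun x := univ.filter (x · = true)
  invFun s i := decide (i ∈ s)
  left_inv x := by ext i; simp
  right_inv s := by ext i; simp

theorem stmt_0_general (n : ℕ) (K : Matrix (Fin n) (Fin n) ℝ)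
    (μ : (Fin n → Bool) → ℝ) :
    (∀ S : Finset (Fin n),
        ∑ x ∈ Finset.univ.filter (fun x : Fin n → Bool => ∀ i ∈ S, x i = true), μ x
          = (K.submatrix (fun i : S => (i : Fin n)) (fun i : S => (i : Fin n))).det)
    ↔
    (∀ x : Fin n → Bool,
        μ x = (-1 : ℝ) ^ (n - (Finset.univ.filter (fun i => x i = true)).card)
          * (K - Matrix.diagonal (fun i => if x i then (0 : ℝ) else 1)).det) := by
  let e := boolFunEquivFinset (Fin n)
  let ν : Finset (Fin n) → ℝ := μ ∘ e.symm
  have hzeta (S : Finset (Fin n)) :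
      ∑ x ∈ univ.filter (fun x : Fin n → Bool => ∀ i ∈ S, x i = true), μ x = upperZeta ν S :=
    sum_equiv e (fun x => by simp [e, boolFunEquivFinset, subset_iff]) (fun x _ => by simp [ν])
  have hdet (x : Fin n → Bool) :
      (-1 : ℝ) ^ (n - #(univ.filter (fun i => x i = true))) *
          (K - Matrix.diagonal (fun i => if x i then (0 : ℝ) else 1)).det =
        upperMoebius K.principalMinor (e x) := by
    rw [← Matrix.neg_one_pow_card_compl_mul_det_sub_diagonal, card_compl, Fintype.card_fin]
    congr
    simp [e, boolFunEquivFinset]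
  calc _ ↔ upperZeta ν = K.principalMinor := by
        simp only [hzeta, funext_iff]; rfl
    _ ↔ ν = upperMoebius K.principalMinor := upperZeta_eq_iff_eq_upperMoebius _ _
    _ ↔ _ := by
        rw [funext_iff, ← e.forall_congr_right]
        simp [hdet, ν]

/-- A function `μ` on `{0,1}^n` is a determinantal measure with kernel `K`
(principal minors of `K` give the probabilities of sets of coordinates being 1)
iff each single-point value is given by `(-1)^(n-|x|) det (K - X)`. -/
theorem stmt_0 (n : ℕ) (hn : 1 ≤ n) (K : Matrix (Fin n) (Fin n) ℝ)
    (μ : (Fin n → Bool) → ℝ) :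
    (∀ S : Finset (Fin n),
        ∑ x ∈ Finset.univ.filter (fun x : Fin n → Bool => ∀ i ∈ S, x i = true), μ x
          = (K.submatrix (fun i : S => (i : Fin n)) (fun i : S => (i : Fin n))).det)
    ↔
    (∀ x : Fin n → Bool,
        μ x = (-1 : ℝ) ^ (n - (Finset.univ.filter (fun i => x i = true)).card)
          * (K - Matrix.diagonal (fun i => if x i then (0 : ℝ) else 1)).det) :=
  stmt_0_general n K μ
end

section
/- Let N ≥ m ≥ 1, let d be an N×m real matrix, let c_1, …, c_N be real numbers with C = diag(c_1,…,c_N), and suppose Δ = dᵀ C d is invertible. Set K = C d Δ⁻¹ dᵀ. Then for every subset S ⊆ {1,…,N}: det(K_S^S) · det(Δ) = ∑_{T} (∏_{i∈T} c_i) · (det d_T)², where the sum is over all subsets T ⊆ {1,…,N} with S ⊆ T and |T| = m, d_T denotes the m×m submatrix of d consisting of the rows indexed by T, and K_S^S denotes the principal submatrix of K with rows and columns indexed by S. -/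
open Matrix BigOperators Finset Equiv

private lemma image_orderEmbOfFin {N m : ℕ} (T : Finset (Fin N)) (h : T.card = m) :
    Finset.univ.image (T.orderEmbOfFin h) = T := by
  ext x
  simp only [Finset.mem_image, Finset.mem_univ, true_and]
  constructor
  · rintro ⟨a, rfl⟩; exact T.orderEmbOfFin_mem h a
  · intro hx
    have : x ∈ Set.range (T.orderEmbOfFin h) := by
      rw [Finset.range_orderEmbOfFin]; exact hx
    exact this

private lemma entry_LDL {R : Type*} [CommRing R] {N m : ℕ}
    (d : Matrix (Fin N) (Fin m) R) (w : Fin N → R) (x y : Fin m) :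
    (dᵀ * Matrix.diagonal w * d) x y = ∑ i, d i x * (w i * d i y) := by
  rw [Matrix.mul_assoc]
  simp only [Matrix.mul_apply, Matrix.transpose_apply]
  refine Finset.sum_congr rfl fun i _ => ?_
  congr 1
  rw [Finset.sum_eq_single i (fun j _ hj => by simp [Matrix.diagonal_apply_ne' w hj]) (by simp)]
  simp [Matrix.diagonal_apply_eq]

private lemma cauchyBinet {R : Type*} [CommRing R] {N m : ℕ}
    (d : Matrix (Fin N) (Fin m) R) (w : Fin N → R) :
    (dᵀ * Matrix.diagonal w * d).det
      = ∑ T : {T : Finset (Fin N) // T.card = m},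
          (∏ i ∈ (T : Finset (Fin N)), w i) *
            (d.submatrix ((T : Finset (Fin N)).orderEmbOfFin T.2) id).det ^ 2 := by
  classical
  set F : (Fin m → Fin N) → R :=
    fun f => (∏ a, (w (f a) * d (f a) a)) * (d.submatrix f id).det with hF
  have hM : ∀ x y, (dᵀ * Matrix.diagonal w * d) x y = ∑ i, d i x * (w i * d i y) :=
    entry_LDL d w
  have key : (dᵀ * Matrix.diagonal w * d).det = ∑ f : Fin m → Fin N, F f := by
    calc (dᵀ * Matrix.diagonal w * d).det
        = ∑ σ : Perm (Fin m), Equiv.Perm.sign σ •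
            ∏ a, ∑ i, d i (σ a) * (w i * d i a) := by
          rw [Matrix.det_apply]
          exact Finset.sum_congr rfl fun σ _ => by rw [Finset.prod_congr rfl fun a _ => hM _ _]
      _ = ∑ σ : Perm (Fin m), ∑ f : Fin m → Fin N, Equiv.Perm.sign σ •
            ∏ a, d (f a) (σ a) * (w (f a) * d (f a) a) := by
          refine Finset.sum_congr rfl fun σ _ => ?_
          rw [Finset.prod_univ_sum, Fintype.piFinset_univ, Finset.smul_sum]
      _ = ∑ f : Fin m → Fin N, ∑ σ : Perm (Fin m), Equiv.Perm.sign σ •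
            ∏ a, d (f a) (σ a) * (w (f a) * d (f a) a) := Finset.sum_comm
      _ = ∑ f : Fin m → Fin N, F f := by
          refine Finset.sum_congr rfl fun f _ => ?_
          rw [hF]
          simp only
          rw [← Matrix.det_transpose (d.submatrix f id), Matrix.det_apply, Finset.mul_sum]
          refine Finset.sum_congr rfl fun σ _ => ?_
          rw [mul_smul_comm, ← Finset.prod_mul_distrib]
          congr 1
          exact Finset.prod_congr rfl fun a _ => by
            simp [Matrix.transpose_apply, Matrix.submatrix_apply, mul_comm]
  rw [key]
  have step2 : ∑ f : Fin m → Fin N, F f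
      = ∑ f ∈ Finset.univ.filter (fun f : Fin m → Fin N => Function.Injective f), F f := by
    refine (Finset.sum_subset (Finset.filter_subset _ _) fun f _ hf => ?_).symm
    have hninj : ¬ Function.Injective f := by
      simpa using hf
    rw [Function.not_injective_iff] at hninj
    obtain ⟨i, j, hij, hne⟩ := hninj
    have hdet : (d.submatrix f id).det = 0 := by
      refine Matrix.det_zero_of_row_eq hne ?_
      funext y
      simp [Matrix.submatrix_apply, hij]
    rw [hF]; simp only; rw [hdet, mul_zero]
  rw [step2]
  -- bijection between pairs (T, σ) and injective functions
  have bij : ∑ p : {T : Finset (Fin N) // T.card = m} × Perm (Fin m),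
        F (fun a => (p.1 : Finset (Fin N)).orderEmbOfFin p.1.2 (p.2 a))
      = ∑ f ∈ Finset.univ.filter (fun f : Fin m → Fin N => Function.Injective f), F f := by
    refine Finset.sum_bij (fun p _ => fun a => (p.1 : Finset (Fin N)).orderEmbOfFin p.1.2 (p.2 a))
      ?_ ?_ ?_ ?_
    · intro p _
      simp only [Finset.mem_filter, Finset.mem_univ, true_and]
      exact ((p.1 : Finset (Fin N)).orderEmbOfFin p.1.2).injective.comp p.2.injective
    · rintro ⟨⟨T1, h1⟩, σ1⟩ _ ⟨⟨T2, h2⟩, σ2⟩ _ heq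
      have heq' : (fun a => T1.orderEmbOfFin h1 (σ1 a)) = (fun a => T2.orderEmbOfFin h2 (σ2 a)) := heq
      have himg : T1 = T2 := by
        have h3 : ∀ (T : Finset (Fin N)) (h : T.card = m) (σ : Perm (Fin m)),
            Finset.univ.image (fun a => T.orderEmbOfFin h (σ a)) = T := by
          intro T h σ
          have : Finset.univ.image (fun a => T.orderEmbOfFin h (σ a))
              = (Finset.univ.image σ).image (T.orderEmbOfFin h) := by
            rw [Finset.image_image]; rfl
          rw [this, Finset.image_univ_equiv, image_orderEmbOfFin]
        rw [← h3 T1 h1 σ1, ← h3 T2 h2 σ2, heq']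
      subst himg
      have hσ : σ1 = σ2 := by
        refine Equiv.ext fun a => ?_
        have h4 : T1.orderEmbOfFin h1 (σ1 a) = T1.orderEmbOfFin h1 (σ2 a) := congrFun heq' a
        exact (T1.orderEmbOfFin h1).injective h4
      subst hσ
      rfl
    · intro f hf
      have hinj : Function.Injective f := by simpa using hf
      have hT : (Finset.univ.image f).card = m := by
        rw [Finset.card_image_of_injective _ hinj, Finset.card_univ, Fintype.card_fin]
      set T : Finset (Fin N) := Finset.univ.image f with hTdef
      have hmem : ∀ a, f a ∈ T := fun a => Finset.mem_image_of_mem f (Finset.mem_univ a)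
      set e := T.orderIsoOfFin hT with he
      have hσinj : Function.Injective (fun a => e.symm ⟨f a, hmem a⟩) := by
        intro a b hab
        have : (⟨f a, hmem a⟩ : {x // x ∈ T}) = ⟨f b, hmem b⟩ := e.symm.injective hab
        exact hinj (Subtype.ext_iff.mp this)
      have hσbij := (Finite.injective_iff_bijective).mp hσinj
      refine ⟨⟨⟨T, hT⟩, Equiv.ofBijective _ hσbij⟩, Finset.mem_univ _, ?_⟩
      funext a
      show T.orderEmbOfFin hT (e.symm ⟨f a, hmem a⟩) = f a
      have : T.orderEmbOfFin hT (e.symm ⟨f a, hmem a⟩) = ((e (e.symm ⟨f a, hmem a⟩)) : Fin N) := by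
        rw [Finset.coe_orderIsoOfFin_apply]
      rw [this, OrderIso.apply_symm_apply]
    · intro p _
      rfl
  rw [← bij, Fintype.sum_prod_type]
  refine Finset.sum_congr rfl fun T _ => ?_
  set g := (T : Finset (Fin N)).orderEmbOfFin T.2 with hg
  set B := d.submatrix g id with hB
  have hterm : ∀ σ : Perm (Fin m),
      F (fun a => g (σ a)) = ((∏ i ∈ (T : Finset (Fin N)), w i) * B.det) *
        (((Equiv.Perm.sign σ : ℤ) : R) * ∏ a, B (σ a) a) := by
    intro σ
    rw [hF]
    simp only
    have h1 : (∏ a, (w (g (σ a)) * d (g (σ a)) a))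
        = (∏ a, w (g (σ a))) * ∏ a, B (σ a) a := by
      rw [← Finset.prod_mul_distrib]
      exact Finset.prod_congr rfl fun a _ => by rw [hB]; rfl
    have h2 : (∏ a, w (g (σ a))) = ∏ i ∈ (T : Finset (Fin N)), w i := by
      rw [Equiv.prod_comp σ (fun a => w (g a)), ← image_orderEmbOfFin (T : Finset (Fin N)) T.2,
        Finset.prod_image (fun a _ b _ h => g.injective h)]
    have h3 : (d.submatrix (fun a => g (σ a)) id).det
        = ((Equiv.Perm.sign σ : ℤ) : R) * B.det := by
      have h4 : d.submatrix (fun a => g (σ a)) id = B.submatrix σ id := rfl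
      rw [h4, Matrix.det_permute]
    rw [h1, h2, h3]
    ring
  rw [Finset.sum_congr rfl fun σ _ => hterm σ, ← Finset.mul_sum, ← Matrix.det_apply', sq]
  exact mul_assoc _ _ _

private lemma coeffDet {ι : Type*} [Fintype ι] [DecidableEq ι] (M : Matrix ι ι ℝ) :
    (Matrix.det ((1 : Matrix ι ι (Polynomial ℝ)) + (Polynomial.X - 1 : Polynomial ℝ) • M.map Polynomial.C)).coeff
        (Fintype.card ι)
      = M.det := by
  classical
  set Q : Matrix ι ι (Polynomial ℝ) :=
    (1 : Matrix ι ι (Polynomial ℝ)) + (Polynomial.X - 1 : Polynomial ℝ) • M.map Polynomial.C with hQ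
  have hentry : ∀ i j, Q i j
      = Polynomial.C (M i j) * Polynomial.X
          + Polynomial.C ((if i = j then (1:ℝ) else 0) - M i j) := by
    intro i j
    by_cases h : i = j <;>
      simp [hQ, h, Matrix.add_apply, Matrix.smul_apply, Matrix.map_apply, Matrix.one_apply,
        smul_eq_mul, map_sub] <;> ring
  rw [Matrix.det_apply', Polynomial.finset_sum_coeff, Matrix.det_apply']
  refine Finset.sum_congr rfl fun σ _ => ?_
  have hc : ((Equiv.Perm.sign σ : ℤ) : Polynomial ℝ)
      = Polynomial.C ((Equiv.Perm.sign σ : ℤ) : ℝ) := by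
    rw [Polynomial.C_eq_intCast]
  rw [hc, Polynomial.coeff_C_mul]
  congr 1
  have hcard : Fintype.card ι = (Finset.univ : Finset ι).card * 1 := by
    simp [Finset.card_univ]
  rw [hcard, Polynomial.coeff_prod_of_natDegree_le]
  · refine Finset.prod_congr rfl fun i _ => ?_
    rw [hentry]
    by_cases h : σ i = i <;>
      simp [h, Polynomial.coeff_add, Polynomial.coeff_C_mul, Polynomial.coeff_X_one,
        Polynomial.coeff_C, Polynomial.coeff_one]
  · intro i _
    rw [hentry]
    exact Polynomial.natDegree_linear_le

private def Emat {N : ℕ} (S : Finset (Fin N)) : Matrix (Fin N) {x : Fin N // x ∈ S} ℝ :=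
  Matrix.of fun i j => if i = (j : Fin N) then 1 else 0

private lemma mul_Emat {N : ℕ} {ι : Type*} [Fintype ι] (S : Finset (Fin N))
    (M : Matrix ι (Fin N) ℝ) :
    M * Emat S = M.submatrix id (fun j : {x : Fin N // x ∈ S} => (j : Fin N)) := by
  ext a j
  simp only [Matrix.mul_apply, Emat, Matrix.of_apply, Matrix.submatrix_apply, id_eq,
    mul_ite, mul_one, mul_zero]
  rw [Finset.sum_ite_eq' Finset.univ ((j : Fin N)) (fun i => M a i)]
  simp

private lemma Emat_mul {N : ℕ} {ι : Type*} [Fintype ι] (S : Finset (Fin N))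
    (M : Matrix (Fin N) ι ℝ) :
    (Emat S)ᵀ * M = M.submatrix (fun j : {x : Fin N // x ∈ S} => (j : Fin N)) id := by
  ext j b
  simp only [Matrix.mul_apply, Emat, Matrix.transpose_apply, Matrix.of_apply,
    Matrix.submatrix_apply, id_eq, ite_mul, one_mul, zero_mul]
  rw [Finset.sum_ite_eq' Finset.univ ((j : Fin N)) (fun i => M i b)]
  simp

set_option maxHeartbeats 2000000

/-- Burton–Pemantle transfer current theorem in matrix form:
for `K = C d Δ⁻¹ dᵀ` with `Δ = dᵀ C d` invertible,
`det(K_S^S) · det Δ = ∑_{S ⊆ T, |T| = m} (∏_{i ∈ T} c i) (det d_T)²`. -/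
theorem stmt_3 (N m : ℕ) (hm : 1 ≤ m) (hNm : m ≤ N)
    (d : Matrix (Fin N) (Fin m) ℝ) (c : Fin N → ℝ)
    (Δ : Matrix (Fin m) (Fin m) ℝ) (hΔ : Δ = dᵀ * Matrix.diagonal c * d)
    (hinv : IsUnit Δ.det)
    (K : Matrix (Fin N) (Fin N) ℝ) (hK : K = Matrix.diagonal c * d * Δ⁻¹ * dᵀ)
    (S : Finset (Fin N)) :
    (K.submatrix (fun i : S => (i : Fin N)) (fun i : S => (i : Fin N))).det * Δ.det
      = ∑ T : {T : Finset (Fin N) // S ⊆ T ∧ T.card = m},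
          (∏ i ∈ (T : Finset (Fin N)), c i) *
            (d.submatrix (fun i : Fin m => (T : Finset (Fin N)).orderEmbOfFin T.2.2 i) id).det ^ 2 := by
  classical
  have hΔT : Δᵀ = Δ := by
    rw [hΔ, Matrix.transpose_mul, Matrix.transpose_mul, Matrix.transpose_transpose,
      Matrix.diagonal_transpose, Matrix.mul_assoc]
  set w : Fin N → Polynomial ℝ :=
    fun i => Polynomial.C (c i) * (if i ∈ S then Polynomial.X else 1) with hw
  set A₀ : Matrix (Fin m) {x : Fin N // x ∈ S} ℝ := dᵀ * Matrix.diagonal c * Emat S with hA0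
  set B₀ : Matrix {x : Fin N // x ∈ S} (Fin m) ℝ := (Emat S)ᵀ * d with hB0
  set KS : Matrix {x : Fin N // x ∈ S} {x : Fin N // x ∈ S} ℝ :=
    K.submatrix (fun i => (i : Fin N)) (fun i => (i : Fin N)) with hKS
  set M₀ : Matrix {x : Fin N // x ∈ S} {x : Fin N // x ∈ S} ℝ := B₀ * (Δ⁻¹ * A₀) with hM0
  clear_value M₀ KS B₀ A₀
  -- Claim 1 : deformed Laplacian
  have claim1 : (d.map Polynomial.C)ᵀ * Matrix.diagonal w * d.map Polynomial.C
      = Δ.map Polynomial.C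
          + (Polynomial.X - 1 : Polynomial ℝ) • ((A₀ * B₀).map Polynomial.C) := by
    refine Matrix.ext fun a b => ?_
    have hL : ((d.map Polynomial.C)ᵀ * Matrix.diagonal w * d.map Polynomial.C) a b
        = ∑ i, Polynomial.C (d i a) * (w i * Polynomial.C (d i b)) :=
      entry_LDL (d.map Polynomial.C) w a b
    have hD : Δ a b = ∑ i, d i a * (c i * d i b) := by
      rw [hΔ]; exact entry_LDL d c a b
    have hAB : (A₀ * B₀) a b = ∑ j : {x : Fin N // x ∈ S}, (d (j : Fin N) a * c (j : Fin N)) * d (j : Fin N) b := by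
      rw [hA0, hB0, mul_Emat, Emat_mul]
      simp only [Matrix.mul_apply, Matrix.submatrix_apply, id_eq]
      refine Finset.sum_congr rfl fun j _ => ?_
      congr 1
      rw [Finset.sum_eq_single ((j : Fin N))
        (fun i _ hi => by simp [Matrix.diagonal_apply_ne c hi]) (by simp)]
      simp [Matrix.transpose_apply, Matrix.diagonal_apply_eq]
    rw [Matrix.add_apply, Matrix.smul_apply, Matrix.map_apply, Matrix.map_apply, hL, hD, hAB]
    rw [Finset.sum_coe_sort _ (fun j => (d j a * c j) * d j b)]
    have hS : ∑ j ∈ S, (d j a * c j) * d j b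
        = ∑ j : Fin N, if j ∈ S then (d j a * c j) * d j b else 0 := by
      rw [Finset.sum_ite_mem, Finset.univ_inter]
    rw [hS, map_sum, map_sum, smul_eq_mul, Finset.mul_sum, ← Finset.sum_add_distrib]
    refine Finset.sum_congr rfl fun i _ => ?_
    by_cases h : i ∈ S <;> simp [hw, h] <;> ring
  -- Claim 2 : factor out Δ
  have h5 : Δ * (Δ⁻¹ * A₀) = A₀ := by
    rw [← Matrix.mul_assoc, Matrix.mul_nonsing_inv Δ hinv, Matrix.one_mul]
  have claim2 : (d.map Polynomial.C)ᵀ * Matrix.diagonal w * d.map Polynomial.C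
      = Δ.map Polynomial.C *
          (1 + ((Polynomial.X - 1 : Polynomial ℝ) • ((Δ⁻¹ * A₀).map Polynomial.C))
            * (B₀.map Polynomial.C)) := by
    rw [claim1, Matrix.mul_add, Matrix.mul_one]
    congr 1
    rw [Matrix.smul_mul, Matrix.mul_smul]
    congr 1
    have e1 : A₀ * B₀ = Δ * (Δ⁻¹ * (A₀ * B₀)) := by
      rw [← Matrix.mul_assoc Δ Δ⁻¹, Matrix.mul_nonsing_inv Δ hinv, Matrix.one_mul]
    calc (A₀ * B₀).map Polynomial.C
        = (Δ * (Δ⁻¹ * (A₀ * B₀))).map Polynomial.C := by rw [← e1]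
      _ = Δ.map Polynomial.C * (Δ⁻¹ * (A₀ * B₀)).map Polynomial.C := Matrix.map_mul
      _ = Δ.map Polynomial.C * ((Δ⁻¹ * A₀).map Polynomial.C * B₀.map Polynomial.C) := by
          congr 1
          rw [← Matrix.mul_assoc, Matrix.map_mul]
  -- determinant identity
  have hdet1 : ((d.map Polynomial.C)ᵀ * Matrix.diagonal w * d.map Polynomial.C).det
      = Polynomial.C Δ.det *
          ((1 : Matrix {x : Fin N // x ∈ S} {x : Fin N // x ∈ S} (Polynomial ℝ))
            + (Polynomial.X - 1 : Polynomial ℝ) • (M₀.map Polynomial.C)).det := by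
    rw [claim2, Matrix.det_mul, ← RingHom.mapMatrix_apply, ← RingHom.map_det]
    congr 1
    rw [Matrix.det_one_add_mul_comm]
    congr 1
    rw [Matrix.mul_smul, ← Matrix.map_mul, hM0]
  -- transpose to K
  have hM0T : M₀ᵀ = KS := by
    have hKS2 : KS = (Emat S)ᵀ * (K * Emat S) := by
      rw [mul_Emat, Emat_mul, hKS]
      rfl
    rw [hM0, hB0, hA0, hKS2, hK]
    simp only [Matrix.transpose_mul, Matrix.transpose_transpose, Matrix.diagonal_transpose,
      Matrix.transpose_nonsing_inv, hΔT, Matrix.mul_assoc]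
  have hdet2 : ((1 : Matrix {x : Fin N // x ∈ S} {x : Fin N // x ∈ S} (Polynomial ℝ))
        + (Polynomial.X - 1 : Polynomial ℝ) • (M₀.map Polynomial.C)).det
      = ((1 : Matrix {x : Fin N // x ∈ S} {x : Fin N // x ∈ S} (Polynomial ℝ))
        + (Polynomial.X - 1 : Polynomial ℝ) • (KS.map Polynomial.C)).det := by
    rw [← Matrix.det_transpose]
    congr 1
    rw [Matrix.transpose_add, Matrix.transpose_one, Matrix.transpose_smul,
      ← Matrix.transpose_map, hM0T]
  have hLHS : KS.det * Δ.det
      = ((d.map Polynomial.C)ᵀ * Matrix.diagonal w * d.map Polynomial.C).det.coeff S.card := by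
    rw [hdet1, hdet2, Polynomial.coeff_C_mul]
    have := coeffDet KS
    rw [Fintype.card_coe] at this
    rw [this, mul_comm]
  -- RHS via Cauchy-Binet
  set W : Finset (Fin N) → ℝ := fun T =>
    if h : T.card = m then (∏ i ∈ T, c i) * ((d.submatrix (T.orderEmbOfFin h) id).det) ^ 2
    else 0 with hWdef
  have hterm : ∀ T : {T : Finset (Fin N) // T.card = m},
      ((∏ i ∈ (T : Finset (Fin N)), w i) *
        (((d.map Polynomial.C).submatrix
          ((T : Finset (Fin N)).orderEmbOfFin T.2) id).det) ^ 2).coeff S.card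
      = if S ⊆ (T : Finset (Fin N)) then W (T : Finset (Fin N)) else 0 := by
    intro T
    have h1 : (∏ i ∈ (T : Finset (Fin N)), w i)
        = Polynomial.C (∏ i ∈ (T : Finset (Fin N)), c i)
            * Polynomial.X ^ (((T : Finset (Fin N)) ∩ S).card) := by
      rw [hw]
      rw [Finset.prod_mul_distrib]
      congr 1
      · rw [map_prod]
      · rw [← Finset.prod_filter, Finset.prod_const, Finset.filter_mem_eq_inter]
    have h2 : ((d.map Polynomial.C).submatrix ((T : Finset (Fin N)).orderEmbOfFin T.2) id).det
        = Polynomial.C ((d.submatrix ((T : Finset (Fin N)).orderEmbOfFin T.2) id).det) := by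
      rw [Matrix.submatrix_map, ← RingHom.mapMatrix_apply, ← RingHom.map_det]
    rw [h1, h2, ← map_pow, mul_right_comm, ← _root_.map_mul, Polynomial.coeff_C_mul,
      Polynomial.coeff_X_pow]
    by_cases hsub : S ⊆ (T : Finset (Fin N))
    · have hint : (T : Finset (Fin N)) ∩ S = S := Finset.inter_eq_right.mpr hsub
      rw [hint, if_pos rfl, if_pos hsub, mul_one]
      simp only [hWdef]
      rw [dif_pos T.2]
    · have hne : ¬ (S.card = ((T : Finset (Fin N)) ∩ S).card) := by
        intro h
        have hsub2 : (T : Finset (Fin N)) ∩ S ⊆ S := Finset.inter_subset_right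
        have heq : (T : Finset (Fin N)) ∩ S = S :=
          Finset.eq_of_subset_of_card_le hsub2 (le_of_eq h)
        refine hsub fun x hx => ?_
        rw [← heq] at hx
        exact Finset.mem_of_mem_inter_left hx
      rw [if_neg hne, if_neg hsub, mul_zero]
  have hRHS : ((d.map Polynomial.C)ᵀ * Matrix.diagonal w * (d.map Polynomial.C)).det.coeff S.card
      = ∑ T : {T : Finset (Fin N) // T.card = m},
          if S ⊆ (T : Finset (Fin N)) then W (T : Finset (Fin N)) else 0 := by
    rw [cauchyBinet (d.map Polynomial.C) w, Polynomial.finset_sum_coeff]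
    exact Finset.sum_congr rfl fun T _ => hterm T
  rw [hLHS, hRHS]
  have e3 : ∑ T : {T : Finset (Fin N) // T.card = m},
        (if S ⊆ (T : Finset (Fin N)) then W (T : Finset (Fin N)) else 0)
      = ∑ T ∈ Finset.univ.filter (fun T : Finset (Fin N) => T.card = m),
          (if S ⊆ T then W T else 0) :=
    (Finset.sum_subtype (p := fun T : Finset (Fin N) => T.card = m)
      (Finset.univ.filter (fun T : Finset (Fin N) => T.card = m))
      (fun x => by simp) (fun T => if S ⊆ T then W T else 0)).symm
  have e4 : ∑ T : {T : Finset (Fin N) // S ⊆ T ∧ T.card = m}, W (T : Finset (Fin N))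
      = ∑ T ∈ Finset.univ.filter (fun T : Finset (Fin N) => S ⊆ T ∧ T.card = m), W T :=
    (Finset.sum_subtype (p := fun T : Finset (Fin N) => S ⊆ T ∧ T.card = m)
      (Finset.univ.filter (fun T : Finset (Fin N) => S ⊆ T ∧ T.card = m))
      (fun x => by simp) W).symm
  have e5 : Finset.univ.filter (fun T : Finset (Fin N) => S ⊆ T ∧ T.card = m)
      = (Finset.univ.filter (fun T : Finset (Fin N) => T.card = m)).filter
          (fun T => S ⊆ T) := by
    rw [Finset.filter_filter]
    exact Finset.filter_congr fun T _ => ⟨fun h => ⟨h.2, h.1⟩, fun h => ⟨h.2, h.1⟩⟩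
  rw [e3, ← Finset.sum_filter, ← e5, ← e4]
  refine Finset.sum_congr rfl fun T _ => ?_
  simp only [hWdef]
  rw [dif_pos T.2.2]
end

section
/- For m ≥ 2 let L be the m×m path-graph Laplacian: L_{00} = L_{m−1,m−1} = 1, L_{kk} = 2 for 1 ≤ k ≤ m−2, L_{k,k+1} = L_{k+1,k} = −1, all other entries 0. For z ∈ ℂ∖{0} define Δ(z) = (2 − z − z⁻¹)·I_m + L and P(z) = det Δ(z) (the characteristic polynomial of the square-grid strip graph of width m with unit conductances). Then the zeros of P are exactly: a zero of multiplicity 2 at z = 1, together with 2(m−1) simple zeros {λ_j, λ_j⁻¹ : j = 1,…,m−1}, where λ_j > 1 is the larger root of the quadratic λ² − (4 − 2cos(jπ/m))λ + 1 = 0. In particular all zeros of P are real, positive, and distinct except for the double zero at z = 1, and they satisfy P(z) = P(1/z). -/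
/-!
With `s = 4 - z - z⁻¹`, expanding `Δ(z)` along its first row gives a three-term recurrence for
its leading minors, which is that of the rescaled Chebyshev polynomials `S_n` (with
`S_n(2 cos θ) sin θ = sin((n+1)θ)`); this yields `P(z) = (s - 2) S_{m-1}(s)`. The roots of
`S_{m-1}` are `2 cos(jπ/m)`, `1 ≤ j ≤ m-1`, and each factor
`s - 2 cos(jπ/m) = λ_j + λ_j⁻¹ - (z + z⁻¹) = -z⁻¹ (z - λ_j)(z - λ_j⁻¹)` splits over `ℝ`, as does
`s - 2 = -z⁻¹ (z - 1)²`. Distinctness of the `λ_j` is injectivity of `cos` on `[0, π]`.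
-/

open Matrix Polynomial Polynomial.Chebyshev Real Finset

theorem Polynomial.Chebyshev.S_real_eq_prod (n : ℕ) :
    S ℝ n = ∏ j ∈ Icc 1 n, (X - Polynomial.C (2 * cos (j * π / (n + 1)))) := by
  have hinj := (range n).nodup_map_iff_injOn.mp (roots_U_real_nodup n)
  have hU := C_leadingCoeff_mul_prod_multiset_X_sub_C (p := U ℝ n) (by
    rw [roots_U_real, natDegree_U_natCast, card_val, card_image_of_injOn hinj, card_range])
  rw [roots_U_real, leadingCoeff_U_natCast, image_val_of_injOn hinj, Multiset.map_map,
    prod_map_val] at hU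
  refine Polynomial.funext fun x => ?_
  rw [S_eq_U_comp_half_mul_X, eval_comp, ← hU, eval_mul, eval_C, eval_prod, eval_prod,
    show (2 : ℝ) ^ n = ∏ _k ∈ range n, 2 by simp, ← prod_mul_distrib, ← Ico_add_one_right_eq_Icc,
    prod_Ico_eq_prod_range, Nat.add_sub_cancel]
  refine prod_congr rfl fun k _ => ?_
  simp only [Function.comp_apply, eval_sub, eval_X, eval_C, eval_mul, invOf_eq_inv]
  push_cast
  ring_nf

theorem add_inv_eq_of_sq_sub_mul_add_one_eq_zero {K : Type*} [Field K] {a b : K} (ha : a ≠ 0)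
    (h : a ^ 2 - b * a + 1 = 0) : a + a⁻¹ = b := by
  field_simp
  linear_combination h

theorem add_inv_sub_add_inv {K : Type*} [Field K] {a z : K} (ha : a ≠ 0) (hz : z ≠ 0) :
    a + a⁻¹ - (z + z⁻¹) = -z⁻¹ * ((z - a) * (z - a⁻¹)) := by
  field_simp
  ring

theorem Real.injOn_cos_nat_mul_pi_div (m : ℕ) :
    Set.InjOn (fun j : ℕ => cos (j * π / m)) (Set.Iic m) := by
  rcases Nat.eq_zero_or_pos m with rfl | hm
  · intro j hj k hk _
    simp_all
  refine injOn_cos.comp (fun j _ k _ hjk => ?_) fun j hj => ⟨by positivity, ?_⟩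
  · have : (m : ℝ) ≠ 0 := by positivity
    field_simp at hjk
    exact_mod_cast hjk
  · rw [div_le_iff₀ (by positivity), mul_comm]
    gcongr
    exact_mod_cast hj

namespace Matrix
variable {R : Type*} [CommRing R]

def tridiag (d : ℕ → R) (n : ℕ) : Matrix (Fin n) (Fin n) R :=
  of fun i j => (if i = j then d i else 0) + (if (i : ℕ) + 1 = j ∨ (j : ℕ) + 1 = i then -1 else 0)

theorem tridiag_congr {d₁ d₂ : ℕ → R} {n : ℕ} (h : ∀ k < n, d₁ k = d₂ k) :
    tridiag d₁ n = tridiag d₂ n := by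
  ext i j
  simp only [tridiag, of_apply, h i i.isLt]

theorem smul_one_add_tridiag (c : R) (d : ℕ → R) (n : ℕ) :
    c • (1 : Matrix (Fin n) (Fin n) R) + tridiag d n = tridiag (fun k => c + d k) n := by
  ext i j
  by_cases h : i = j <;> simp [tridiag, h]

theorem tridiag_apply_of_far (d : ℕ → R) {n : ℕ} {i j : Fin n}
    (h : (i : ℕ) + 2 ≤ j ∨ (j : ℕ) + 2 ≤ i) : tridiag d n i j = 0 := by
  simp only [tridiag, of_apply]
  rw [if_neg (by omega), if_neg (by omega), add_zero]

theorem tridiag_submatrix_succ (d : ℕ → R) (n : ℕ) :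
    (tridiag d (n + 1)).submatrix Fin.succ Fin.succ = tridiag (fun k => d (k + 1)) n := by
  ext i j
  simp [tridiag, Fin.succ_inj]

theorem det_tridiag_add_two (d : ℕ → R) (n : ℕ) :
    (tridiag d (n + 2)).det =
      d 0 * (tridiag (fun k => d (k + 1)) (n + 1)).det - (tridiag (fun k => d (k + 2)) n).det := by
  have hminor : ((tridiag d (n + 2)).submatrix Fin.succ (Fin.succAbove 1)).submatrix
      (Fin.succAbove 0) Fin.succ = tridiag (fun k => d (k + 2)) n := by
    ext i j
    simp [tridiag]
  have hB : ((tridiag d (n + 2)).submatrix Fin.succ (Fin.succAbove 1)).det =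
      -(tridiag (fun k => d (k + 2)) n).det := by
    rw [det_succ_column_zero, Fin.sum_univ_succ, Finset.sum_eq_zero fun i _ => ?_, hminor]
    · simp [tridiag]
    · rw [submatrix_apply, Fin.succAbove_of_castSucc_lt _ _ (by simp),
        tridiag_apply_of_far _ (by simp), mul_zero, zero_mul]
  have h₀₀ : tridiag d (n + 2) 0 0 = d 0 := by simp [tridiag]
  have h₀₁ : tridiag d (n + 2) 0 1 = -1 := by simp [tridiag]
  rw [det_succ_row_zero, Fin.sum_univ_succ, Fin.sum_univ_succ, Finset.sum_eq_zero fun i _ => ?_]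
  · rw [Fin.succ_zero_eq_one, hB, Fin.succAbove_zero, tridiag_submatrix_succ, h₀₀, h₀₁]
    simp only [Fin.val_zero, Fin.val_one, pow_zero, pow_one]
    ring
  · rw [tridiag_apply_of_far _ (by simp), mul_zero, zero_mul]

theorem det_tridiag_sub_one_last (s : R) : ∀ n : ℕ,
    (tridiag (fun k => if k + 1 = n then s - 1 else s) n).det =
      (S R n).eval s - (S R (n - 1 : ℤ)).eval s
  | 0 => by simp
  | 1 => by simp [det_unique, tridiag]
  | n + 2 => by
    have h₁ := det_tridiag_sub_one_last s (n + 1)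
    have h₀ := det_tridiag_sub_one_last s n
    rw [det_tridiag_add_two]
    simp only [Nat.reduceEqDiff, if_false] at h₁ ⊢
    rw [h₁, h₀]
    have h₂ := congrArg (eval s) (S_add_two R n)
    have h₃ := congrArg (eval s) (S_add_one R n)
    simp only [eval_sub, eval_mul, eval_X] at h₂ h₃
    push_cast
    rw [show (n : ℤ) + 2 - 1 = n + 1 by ring, show (n : ℤ) + 1 - 1 = n by ring]
    linear_combination h₃ - h₂

variable (R) in
def pathLaplacian (m : ℕ) : Matrix (Fin m) (Fin m) R :=
  tridiag (fun k => if k = 0 ∨ k = m - 1 then 1 else 2) m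

theorem det_smul_one_add_pathLaplacian (c : R) (n : ℕ) :
    (c • 1 + pathLaplacian R (n + 2)).det = c * (S R (n + 1 : ℤ)).eval (c + 2) := by
  have h₁ : tridiag (fun k => c + if k + 1 = 0 ∨ k + 1 = n + 2 - 1 then 1 else 2) (n + 1) =
      tridiag (fun k => if k + 1 = n + 1 then c + 2 - 1 else c + 2) (n + 1) :=
    tridiag_congr fun k _ => by
      simp only [show k + 1 = 0 ∨ k + 1 = n + 2 - 1 ↔ k + 1 = n + 1 by omega]
      split_ifs <;> ring
  have h₀ : tridiag (fun k => c + if k + 2 = 0 ∨ k + 2 = n + 2 - 1 then 1 else 2) n =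
      tridiag (fun k => if k + 1 = n then c + 2 - 1 else c + 2) n :=
    tridiag_congr fun k _ => by
      simp only [show k + 2 = 0 ∨ k + 2 = n + 2 - 1 ↔ k + 1 = n by omega]
      split_ifs <;> ring
  rw [pathLaplacian, smul_one_add_tridiag, det_tridiag_add_two, h₁, h₀,
    det_tridiag_sub_one_last, det_tridiag_sub_one_last, if_pos (Or.inl rfl)]
  have h := congrArg (eval (c + 2)) (S_add_one R n)
  simp only [eval_sub, eval_mul, eval_X] at h
  push_cast
  rw [show (n : ℤ) + 1 - 1 = n by ring]
  linear_combination h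

theorem det_smul_one_add_pathLaplacian_eq_prod {A : Type*} [CommRing A] [Algebra ℝ A] (c : A)
    {m : ℕ} (hm : 2 ≤ m) :
    (c • 1 + pathLaplacian A m).det =
      c * ∏ j ∈ Icc 1 (m - 1), (c + 2 - algebraMap ℝ A (2 * cos (j * π / m))) := by
  obtain ⟨n, rfl⟩ : ∃ n, m = n + 2 := ⟨m - 2, by omega⟩
  have hS := congrArg (aeval (c + 2)) (S_real_eq_prod (n + 1))
  rw [aeval_S, map_prod] at hS
  push_cast at hS
  rw [det_smul_one_add_pathLaplacian, hS, show n + 2 - 1 = n + 1 from rfl]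
  simp only [map_sub, aeval_X, Polynomial.aeval_C, Nat.cast_add, Nat.cast_ofNat, add_assoc,
    one_add_one_eq_two]

theorem det_two_sub_add_inv_smul_one_add_pathLaplacian {m : ℕ} (hm : 2 ≤ m)
    {lam : ℕ → ℝ}
    (hlam : ∀ j ∈ Icc 1 (m - 1), lam j ≠ 0 ∧ lam j + (lam j)⁻¹ = 4 - 2 * cos (j * π / m))
    {z : ℂ} (hz : z ≠ 0) :
    ((2 - z - z⁻¹) • 1 + pathLaplacian ℂ m).det = (-1) ^ m * z⁻¹ ^ m * (z - 1) ^ 2 *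
      ∏ j ∈ Icc 1 (m - 1), ((z - lam j) * (z - (lam j : ℂ)⁻¹)) := by
  have h₁ : 2 - z - z⁻¹ = -z⁻¹ * (z - 1) ^ 2 := by
    simpa [sq, one_add_one_eq_two, sub_sub] using add_inv_sub_add_inv one_ne_zero hz
  have hj : ∀ j ∈ Icc 1 (m - 1), 2 - z - z⁻¹ + 2 - algebraMap ℝ ℂ (2 * cos (j * π / m)) =
      -z⁻¹ * ((z - lam j) * (z - (lam j : ℂ)⁻¹)) := by
    intro j hj
    obtain ⟨hne, hsum⟩ := hlam j hj
    rw [← add_inv_sub_add_inv (Complex.ofReal_ne_zero.mpr hne) hz, ← Complex.ofReal_inv,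
      ← Complex.ofReal_add, hsum]
    simp only [Complex.coe_algebraMap, Complex.ofReal_sub, Complex.ofReal_mul,
      Complex.ofReal_ofNat]
    ring
  have hpow : -z⁻¹ * (-z⁻¹) ^ (m - 1) = (-1) ^ m * z⁻¹ ^ m := by
    rw [← pow_succ', Nat.sub_add_cancel (by omega), neg_pow]
  rw [det_smul_one_add_pathLaplacian_eq_prod _ hm, prod_congr rfl hj, prod_mul_distrib,
    prod_const, Nat.card_Icc, Nat.add_sub_cancel, h₁]
  linear_combination
    (z - 1) ^ 2 * (∏ j ∈ Icc 1 (m - 1), ((z - lam j) * (z - (lam j : ℂ)⁻¹))) * hpow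

end Matrix

/-- Zeros of the characteristic polynomial `P(z) = det((2 - z - z⁻¹)·I + L)` of the
square-grid strip of width `m` with unit conductances (`L` the path Laplacian):
`P` is reciprocal, and its zeros are exactly a double zero at `z = 1` plus the
`2(m-1)` simple zeros `λ_j, λ_j⁻¹` where `λ_j > 1` is the larger root of
`λ² - (4 - 2cos(jπ/m))λ + 1 = 0`; in particular all zeros are real, positive and
distinct except for the double zero at `1`. -/
theorem stmt_5 (m : ℕ) (hm : 2 ≤ m)
    (Δ : ℂ → Matrix (Fin m) (Fin m) ℂ)
    (hΔ : ∀ z : ℂ, ∀ i j : Fin m, Δ z i j =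
      (if i = j then
          (2 - z - z⁻¹) + (if (i : ℕ) = 0 ∨ (i : ℕ) = m - 1 then 1 else 2)
        else 0)
      + (if (i : ℕ) + 1 = (j : ℕ) ∨ (j : ℕ) + 1 = (i : ℕ) then -1 else 0))
    (P : ℂ → ℂ) (hP : ∀ z : ℂ, P z = (Δ z).det)
    (lam : ℕ → ℝ)
    (hlam : ∀ j ∈ Finset.Icc 1 (m - 1), 1 < lam j ∧
      lam j ^ 2 - (4 - 2 * Real.cos ((j : ℝ) * Real.pi / m)) * lam j + 1 = 0) :
    (∀ z : ℂ, z ≠ 0 → P z = P z⁻¹)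
    ∧ (∀ j ∈ Finset.Icc 1 (m - 1), ∀ k ∈ Finset.Icc 1 (m - 1), j ≠ k → lam j ≠ lam k)
    ∧ (∀ z : ℂ, z ≠ 0 →
        P z = (-1 : ℂ) ^ m * (z⁻¹) ^ m * (z - 1) ^ 2 *
          ∏ j ∈ Finset.Icc 1 (m - 1), ((z - (lam j : ℂ)) * (z - ((lam j : ℝ)⁻¹ : ℂ))))
    ∧ (∀ z : ℂ, z ≠ 0 →
        (P z = 0 ↔ z = 1 ∨ ∃ j ∈ Finset.Icc 1 (m - 1),
          z = (lam j : ℂ) ∨ z = ((lam j : ℝ)⁻¹ : ℂ))) := by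
  have hΔ' : ∀ z, Δ z = (2 - z - z⁻¹) • 1 + pathLaplacian ℂ m := fun z => by
    ext i j
    rw [hΔ, pathLaplacian, smul_one_add_tridiag]
    rfl
  have hlam' : ∀ j ∈ Icc 1 (m - 1), lam j ≠ 0 ∧ lam j + (lam j)⁻¹ = 4 - 2 * cos (j * π / m) := by
    intro j hj
    obtain ⟨hgt, hquad⟩ := hlam j hj
    have hne : lam j ≠ 0 := (zero_lt_one.trans hgt).ne'
    exact ⟨hne, add_inv_eq_of_sq_sub_mul_add_one_eq_zero hne hquad⟩
  have hfactor : ∀ z : ℂ, z ≠ 0 → P z = (-1 : ℂ) ^ m * (z⁻¹) ^ m * (z - 1) ^ 2 *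
      ∏ j ∈ Icc 1 (m - 1), ((z - (lam j : ℂ)) * (z - ((lam j : ℝ)⁻¹ : ℂ))) := fun z hz => by
    rw [hP, hΔ', det_two_sub_add_inv_smul_one_add_pathLaplacian hm hlam' hz]
  refine ⟨fun z _ => ?_, fun j hj k hk hjk heq => hjk ?_, hfactor, fun z hz => ?_⟩
  · rw [hP, hP, hΔ', hΔ', inv_inv, sub_right_comm]
  · have hle : ∀ i ∈ Icc 1 (m - 1), i ∈ Set.Iic m := fun i hi =>
      (mem_Icc.mp hi).2.trans (m.sub_le 1)
    refine Real.injOn_cos_nat_mul_pi_div m (hle j hj) (hle k hk) ?_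
    have hcos := (hlam' j hj).2
    rw [heq, (hlam' k hk).2] at hcos
    show cos _ = cos _
    linarith
  · rw [hfactor z hz]
    simp [hz, prod_eq_zero_iff, sub_eq_zero]
end

section
/- Let M ≥ 0 and define P(z,w) = 4 + M − z − z⁻¹ − w − w⁻¹ for z, w ∈ ℂ∖{0}. Then for all r₁, r₂ > 0, the set Z = {(z,w) ∈ ℂ² : |z| = r₁, |w| = r₂, P(z,w) = 0} contains at most two points, and Z is invariant under complex conjugation: if (z,w) ∈ Z then (z̄, w̄) ∈ Z. -/
/-!
Put `u = z + z⁻¹`, `v = w + w⁻¹` and `s = 4 + M`, so that `P = 0` reads `u + v = s`. On the circle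
`|z| = r` one has `Re u = (1 + r⁻²) Re z` and `Im u = (1 - r⁻²) Im z`, so `u` lies on an ellipse
with foci `±2` and semi-axes `a = r₁ + r₁⁻¹`, `|α| = |r₁ - r₁⁻¹|`; likewise `v`, with `b`, `β`.
Eliminating `Im u = -Im v` between the two ellipse equations leaves a quadratic in `A = Re u`.
Its difference at two admissible values `A`, `A'` factors as `(A' - A) (L A + L A')` with
`L A = b²α² A + a²β² (s - A)`, and `L` is positive on the admissible range because `s ≥ 4`.
So `Re u` is unique, hence so are `Re z` and `Re w`, and `z`, `w` are determined up to
conjugation. A mixed conjugation `(z̄, w)` makes `u` and `v` real, which for non-real `z`, `w`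
forces `|z| = |w| = 1`, and then `2 Re z + 2 Re w = s ≥ 4` forces `z = 1`.
-/

open ComplexConjugate

lemma add_inv_sq_eq_sub_inv_sq_add_four {r : ℝ} (hr : r ≠ 0) :
    (r + r⁻¹) ^ 2 = (r - r⁻¹) ^ 2 + 4 := by
  linear_combination 4 * mul_inv_cancel₀ hr

lemma weighted_sum_pos_of_four_le_add {a b α β A B : ℝ} (ha : a ^ 2 = α ^ 2 + 4)
    (hb : b ^ 2 = β ^ 2 + 4) (hA : A ≤ a) (hB : B ≤ b) (hAB : 4 ≤ A + B) (hαβ : α ≠ 0 ∨ β ≠ 0) :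
    0 < b ^ 2 * α ^ 2 * A + a ^ 2 * β ^ 2 * B := by
  have hsum : b ^ 2 * α ^ 2 * A + a ^ 2 * β ^ 2 * B
      = α ^ 2 * β ^ 2 * (A + B) + 4 * (α ^ 2 * A + β ^ 2 * B) := by
    rw [ha, hb]; ring
  rw [hsum]
  rcases lt_or_ge B 0 with hB0 | hB0
  · have hA4 : 4 < A := by linarith
    -- `4 - B ≤ A ≤ a` gives `α ^ 2 = a ^ 2 - 4 ≥ (4 - B) ^ 2 - 4 > -B`
    have hα : 0 < α ^ 2 + B := by nlinarith
    nlinarith [mul_nonneg (sq_nonneg β) hα.le,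
      mul_nonneg (mul_nonneg (sq_nonneg α) (sq_nonneg β)) (sub_nonneg.mpr hAB),
      mul_pos (by nlinarith : 0 < α ^ 2) (by linarith : 0 < A)]
  rcases lt_or_ge A 0 with hA0 | hA0
  · have hB4 : 4 < B := by linarith
    have hβ : 0 < β ^ 2 + A := by nlinarith
    nlinarith [mul_nonneg (sq_nonneg α) hβ.le,
      mul_nonneg (mul_nonneg (sq_nonneg α) (sq_nonneg β)) (sub_nonneg.mpr hAB),
      mul_pos (by nlinarith : 0 < β ^ 2) (by linarith : 0 < B)]
  have hαA := mul_nonneg (sq_nonneg α) hA0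
  have hβB := mul_nonneg (sq_nonneg β) hB0
  by_cases hα : α = 0
  · subst hα
    have hβ : β ≠ 0 := hαβ.resolve_left (not_not.mpr rfl)
    have hB2 : 2 ≤ B := by nlinarith
    nlinarith [mul_pos (by positivity : 0 < β ^ 2) (by linarith : 0 < B)]
  by_cases hβ : β = 0
  · subst hβ
    have hA2 : 2 ≤ A := by nlinarith
    nlinarith [mul_pos (by positivity : 0 < α ^ 2) (by linarith : 0 < A)]
  nlinarith [mul_pos (by positivity : 0 < α ^ 2) (by positivity : 0 < β ^ 2)]

namespace Complex

/-- The image of the circle `|z| = r` under `z ↦ z + z⁻¹`: an ellipse with foci `±2`, which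
degenerates to the segment `[-2, 2]` when `r = 1`. -/
def joukowskiEllipse (r : ℝ) : Set ℂ :=
  {u | (r - r⁻¹) ^ 2 * u.re ^ 2 + (r + r⁻¹) ^ 2 * u.im ^ 2 = (r + r⁻¹) ^ 2 * (r - r⁻¹) ^ 2 ∧
    |u.re| ≤ r + r⁻¹}

lemma re_add_inv (z : ℂ) : (z + z⁻¹).re = (1 + (‖z‖ ^ 2)⁻¹) * z.re := by
  rw [add_re, inv_re, normSq_eq_norm_sq]; ring

lemma im_add_inv (z : ℂ) : (z + z⁻¹).im = (1 - (‖z‖ ^ 2)⁻¹) * z.im := by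
  rw [add_im, inv_im, normSq_eq_norm_sq]; ring

lemma add_inv_mem_joukowskiEllipse {z : ℂ} {r : ℝ} (hr : 0 < r) (hz : ‖z‖ = r) :
    z + z⁻¹ ∈ joukowskiEllipse r := by
  subst hz
  refine ⟨?_, ?_⟩
  · rw [re_add_inv, im_add_inv]
    field_simp
    linear_combination -(‖z‖ ^ 2 - 1) ^ 2 * sq_norm_sub_sq_re z
  · rw [re_add_inv, abs_mul, abs_of_pos (by positivity)]
    calc (1 + (‖z‖ ^ 2)⁻¹) * |z.re| ≤ (1 + (‖z‖ ^ 2)⁻¹) * ‖z‖ := by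
          gcongr; exact abs_re_le_norm z
      _ = ‖z‖ + ‖z‖⁻¹ := by field_simp

lemma eq_or_eq_conj_of_re_eq_of_norm_eq {z z' : ℂ} (hre : z'.re = z.re) (hnorm : ‖z'‖ = ‖z‖) :
    z' = z ∨ z' = conj z := by
  have him : z'.im ^ 2 = z.im ^ 2 := by
    linear_combination sq_norm_sub_sq_re z - sq_norm_sub_sq_re z' - (z'.re + z.re) * hre
      + (‖z'‖ + ‖z‖) * hnorm
  rcases sq_eq_sq_iff_eq_or_eq_neg.mp him with h | h
  · exact Or.inl (ext hre h)
  · exact Or.inr (ext hre (by rw [conj_im, h]))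

lemma re_eq_of_mem_joukowskiEllipse_of_add_eq {r₁ r₂ s : ℝ} {u v u' v' : ℂ}
    (hr₁ : r₁ ≠ 0) (hr₂ : r₂ ≠ 0) (hs : 4 ≤ s)
    (hu : u ∈ joukowskiEllipse r₁) (hv : v ∈ joukowskiEllipse r₂) (huv : u + v = s)
    (hu' : u' ∈ joukowskiEllipse r₁) (hv' : v' ∈ joukowskiEllipse r₂) (huv' : u' + v' = s) :
    u'.re = u.re := by
  simp only [Complex.ext_iff, add_re, add_im, ofReal_re, ofReal_im] at huv huv'
  obtain ⟨hu, hu_le⟩ := hu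
  obtain ⟨hv, hv_le⟩ := hv
  obtain ⟨hu', hu_le'⟩ := hu'
  obtain ⟨hv', hv_le'⟩ := hv'
  simp only [eq_sub_of_add_eq' huv.1, eq_neg_of_add_eq_zero_right huv.2,
    eq_sub_of_add_eq' huv'.1, eq_neg_of_add_eq_zero_right huv'.2] at hv hv_le hv' hv_le'
  have ha := add_inv_sq_eq_sub_inv_sq_add_four hr₁
  have hb := add_inv_sq_eq_sub_inv_sq_add_four hr₂
  set a := r₁ + r₁⁻¹
  set α := r₁ - r₁⁻¹
  set b := r₂ + r₂⁻¹
  set β := r₂ - r₂⁻¹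
  by_cases hαβ : α = 0 ∧ β = 0
  · rw [hαβ.1] at ha
    rw [hαβ.2] at hb
    have ha2 : a ≤ 2 := by nlinarith
    have hb2 : b ≤ 2 := by nlinarith
    linarith [le_of_abs_le hu_le, le_of_abs_le hv_le, le_of_abs_le hu_le', le_of_abs_le hv_le']
  have hfac : (u'.re - u.re) * (b ^ 2 * α ^ 2 * (u.re + u'.re)
      + a ^ 2 * β ^ 2 * ((s - u.re) + (s - u'.re))) = 0 := by
    linear_combination b ^ 2 * hu' - a ^ 2 * hv' - b ^ 2 * hu + a ^ 2 * hv
  have h₁ := weighted_sum_pos_of_four_le_add ha hb (le_of_abs_le hu_le) (le_of_abs_le hv_le)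
    (by linarith) (not_and_or.mp hαβ)
  have h₂ := weighted_sum_pos_of_four_le_add ha hb (le_of_abs_le hu_le') (le_of_abs_le hv_le')
    (by linarith) (not_and_or.mp hαβ)
  exact (sub_eq_zero.mp <| (mul_eq_zero.mp hfac).resolve_right (by linarith))

lemma norm_eq_one_of_im_add_inv_eq_zero {z : ℂ} (h : (z + z⁻¹).im = 0) (hz : z.im ≠ 0) :
    ‖z‖ = 1 := by
  rw [im_add_inv, mul_eq_zero, sub_eq_zero, eq_comm, inv_eq_one, pow_eq_one_iff_of_nonneg
    (norm_nonneg z) two_ne_zero] at h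
  exact h.resolve_right hz

lemma conj_eq_or_conj_eq_of_add_inv_add_eq {s : ℝ} (hs : 4 ≤ s) {z w : ℂ}
    (h : z + z⁻¹ + (w + w⁻¹) = s) (h' : conj z + (conj z)⁻¹ + (w + w⁻¹) = s) :
    conj z = z ∨ conj w = w := by
  rw [conj_eq_iff_im, conj_eq_iff_im, or_iff_not_and_not]
  rintro ⟨hz, hw⟩
  have him : (z + z⁻¹).im + (w + w⁻¹).im = 0 := by rw [← add_im, h, ofReal_im]
  have him' : -(z + z⁻¹).im + (w + w⁻¹).im = 0 := by
    rw [← conj_im, map_add, map_inv₀, ← add_im, h', ofReal_im]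
  have hz1 := norm_eq_one_of_im_add_inv_eq_zero (by linarith) hz
  have hw1 := norm_eq_one_of_im_add_inv_eq_zero (by linarith) hw
  have hre := congrArg re h
  rw [add_re, re_add_inv, re_add_inv, hz1, hw1, ofReal_re] at hre
  have hzre : z.re = 1 := by linarith [re_le_norm z, re_le_norm w]
  have him_sq := sq_norm_sub_sq_re z
  rw [hzre, hz1, sub_self, eq_comm, pow_eq_zero_iff two_ne_zero] at him_sq
  exact hz him_sq

lemma conj_add_inv_add_eq {s : ℝ} {z w : ℂ} (h : z + z⁻¹ + (w + w⁻¹) = s) :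
    conj z + (conj z)⁻¹ + (conj w + (conj w)⁻¹) = s := by
  rw [← map_inv₀, ← map_inv₀, ← map_add, ← map_add, ← map_add, h, conj_ofReal]

lemma eq_or_eq_conj_of_add_inv_add_eq {r₁ r₂ s : ℝ} (hr₁ : 0 < r₁) (hr₂ : 0 < r₂) (hs : 4 ≤ s)
    {z w z' w' : ℂ} (hz : ‖z‖ = r₁) (hw : ‖w‖ = r₂) (hz' : ‖z'‖ = r₁) (hw' : ‖w'‖ = r₂)
    (h : z + z⁻¹ + (w + w⁻¹) = s) (h' : z' + z'⁻¹ + (w' + w'⁻¹) = s) :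
    (z', w') = (z, w) ∨ (z', w') = (conj z, conj w) := by
  have hu_re := re_eq_of_mem_joukowskiEllipse_of_add_eq hr₁.ne' hr₂.ne' hs
    (add_inv_mem_joukowskiEllipse hr₁ hz) (add_inv_mem_joukowskiEllipse hr₂ hw) h
    (add_inv_mem_joukowskiEllipse hr₁ hz') (add_inv_mem_joukowskiEllipse hr₂ hw') h'
  have hv_re : (w' + w'⁻¹).re = (w + w⁻¹).re := by
    have e := congrArg re h
    have e' := congrArg re h'
    rw [add_re, ofReal_re] at e e'
    linarith
  rw [re_add_inv, re_add_inv, hz, hz'] at hu_re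
  rw [re_add_inv, re_add_inv, hw, hw'] at hv_re
  rcases eq_or_eq_conj_of_re_eq_of_norm_eq (mul_left_cancel₀ (by positivity) hu_re)
    (hz'.trans hz.symm) with rfl | rfl <;>
  rcases eq_or_eq_conj_of_re_eq_of_norm_eq (mul_left_cancel₀ (by positivity) hv_re)
    (hw'.trans hw.symm) with rfl | rfl
  · exact Or.inl rfl
  · rw [add_comm] at h h'
    rcases conj_eq_or_conj_eq_of_add_inv_add_eq hs h h' with hw | hz
    · rw [hw]
      exact Or.inl rfl
    · rw [hz]
      exact Or.inr rfl
  · rcases conj_eq_or_conj_eq_of_add_inv_add_eq hs h h' with hz | hw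
    · rw [hz]
      exact Or.inl rfl
    · rw [hw]
      exact Or.inr rfl
  · exact Or.inr rfl

end Complex

lemma eq_or_eq_or_eq_of_forall_eq_or_eq {α : Type*} {S : Set α} (f : α → α)
    (h : ∀ p ∈ S, ∀ q ∈ S, q = p ∨ q = f p) :
    ∀ p ∈ S, ∀ q ∈ S, ∀ r ∈ S, p = q ∨ p = r ∨ q = r := by
  intro p hp q hq r hr
  rcases h p hp q hq with rfl | rfl
  · exact Or.inl rfl
  rcases h p hp r hr with rfl | rfl
  · exact Or.inr (Or.inl rfl)
  · exact Or.inr (Or.inr rfl)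

/-- Harnack property of the spectral curve of the massive Laplacian on `ℤ²`:
for `M ≥ 0`, the zero set of `P(z,w) = 4 + M - z - z⁻¹ - w - w⁻¹` meets each torus
`{|z| = r₁, |w| = r₂}` in at most two points, and this intersection is invariant
under complex conjugation. -/
theorem stmt_7 (M : ℝ) (hM : 0 ≤ M) (r₁ r₂ : ℝ) (h1 : 0 < r₁) (h2 : 0 < r₂)
    (Z : Set (ℂ × ℂ))
    (hZ : Z = {p : ℂ × ℂ | ‖p.1‖ = r₁ ∧ ‖p.2‖ = r₂ ∧
      4 + (M : ℂ) - p.1 - p.1⁻¹ - p.2 - p.2⁻¹ = 0}) :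
    (∀ p ∈ Z, ∀ q ∈ Z, ∀ r ∈ Z, p = q ∨ p = r ∨ q = r)
    ∧ (∀ p ∈ Z, ((starRingEnd ℂ) p.1, (starRingEnd ℂ) p.2) ∈ Z) := by
  subst hZ
  have hs : (4 : ℝ) ≤ 4 + M := by linarith
  have hP (z w : ℂ) :
      4 + (M : ℂ) - z - z⁻¹ - w - w⁻¹ = 0 ↔ z + z⁻¹ + (w + w⁻¹) = ((4 + M : ℝ) : ℂ) := by
    push_cast
    constructor <;> intro h <;> linear_combination -h
  refine ⟨eq_or_eq_or_eq_of_forall_eq_or_eq (fun p => (conj p.1, conj p.2)) ?_, ?_⟩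
  · rintro ⟨z, w⟩ ⟨hz, hw, he⟩ ⟨z', w'⟩ ⟨hz', hw', he'⟩
    exact Complex.eq_or_eq_conj_of_add_inv_add_eq h1 h2 hs hz hw hz' hw' ((hP z w).mp he)
      ((hP z' w').mp he')
  · rintro ⟨z, w⟩ ⟨hz, hw, he⟩
    exact ⟨(Complex.norm_conj z).trans hz, (Complex.norm_conj w).trans hw,
      (hP _ _).mpr (Complex.conj_add_inv_add_eq ((hP z w).mp he))⟩
end

section
/- Let a = e^{iπ/4} and b = e^{3iπ/4}. For every u ∈ ℂ with u ∉ {a, −a, b, −b}, setting ξ = (u+a)(u+b)/((u−a)(u−b)) and η = (u+a)(u−b)/((u−a)(u+b)), one has ξ ≠ 0, η ≠ 0, and 4 − ξ − ξ⁻¹ − η − η⁻¹ = 0. -/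
/-! With `p = (u+a)(u+b)`, `q = (u-a)(u-b)`, `r = (u+a)(u-b)`, `s = (u-a)(u+b)` one has
`pq = rs = (u²-a²)(u²-b²)` and `p² + q² + r² + s² - 4pq = 8(a²+b²)u²`, so for `u ≠ 0` the point
`(ξ, η)` lies on the curve exactly when `a² + b² = 0`. For `a = e^{iπ/4}` this holds because
`b = e^{3iπ/4} = i·a`. -/

section SpectralCurve

variable {K : Type*} [Field K] {a b u : K}

def spectralXi (a b u : K) : K := (u + a) * (u + b) / ((u - a) * (u - b))

def spectralEta (a b u : K) : K := (u + a) * (u - b) / ((u - a) * (u + b))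

variable (hua : u ≠ a) (hua' : u ≠ -a) (hub : u ≠ b) (hub' : u ≠ -b)
include hua hua' hub hub'

theorem spectralXi_ne_zero : spectralXi a b u ≠ 0 :=
  div_ne_zero
    (mul_ne_zero (add_eq_zero_iff_eq_neg.not.mpr hua') (add_eq_zero_iff_eq_neg.not.mpr hub'))
    (mul_ne_zero (sub_ne_zero.mpr hua) (sub_ne_zero.mpr hub))

theorem spectralEta_ne_zero : spectralEta a b u ≠ 0 :=
  div_ne_zero (mul_ne_zero (add_eq_zero_iff_eq_neg.not.mpr hua') (sub_ne_zero.mpr hub))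
    (mul_ne_zero (sub_ne_zero.mpr hua) (add_eq_zero_iff_eq_neg.not.mpr hub'))

theorem spectralXi_add_inv_add_spectralEta_add_inv :
    spectralXi a b u + (spectralXi a b u)⁻¹ + spectralEta a b u + (spectralEta a b u)⁻¹ =
      4 + 8 * (a ^ 2 + b ^ 2) * u ^ 2 / ((u ^ 2 - a ^ 2) * (u ^ 2 - b ^ 2)) := by
  have hsub_a : u - a ≠ 0 := sub_ne_zero.mpr hua
  have hsub_b : u - b ≠ 0 := sub_ne_zero.mpr hub
  have hadd_a : u + a ≠ 0 := add_eq_zero_iff_eq_neg.not.mpr hua'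
  have hadd_b : u + b ≠ 0 := add_eq_zero_iff_eq_neg.not.mpr hub'
  have hsq_a : u ^ 2 - a ^ 2 ≠ 0 := by rw [sq_sub_sq]; exact mul_ne_zero hadd_a hsub_a
  have hsq_b : u ^ 2 - b ^ 2 ≠ 0 := by rw [sq_sub_sq]; exact mul_ne_zero hadd_b hsub_b
  unfold spectralXi spectralEta
  field_simp
  ring

theorem spectralCurve_eq_zero (hab : a ^ 2 + b ^ 2 = 0) :
    4 - spectralXi a b u - (spectralXi a b u)⁻¹ - spectralEta a b u - (spectralEta a b u)⁻¹ =
      0 := by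
  linear_combination -spectralXi_add_inv_add_spectralEta_add_inv hua hua' hub hub' -
    (8 * u ^ 2 / ((u ^ 2 - a ^ 2) * (u ^ 2 - b ^ 2))) * hab

end SpectralCurve

theorem Complex.exp_three_mul_I_mul_pi_div_four :
    Complex.exp (3 * Complex.I * Real.pi / 4) =
      Complex.I * Complex.exp (Complex.I * Real.pi / 4) := by
  calc Complex.exp (3 * Complex.I * Real.pi / 4)
      = Complex.exp (Real.pi / 2 * Complex.I + Complex.I * Real.pi / 4) := by ring_nf
    _ = _ := by rw [Complex.exp_add, Complex.exp_pi_div_two_mul_I]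

/-- Rational parametrization of the spectral curve `4 - ξ - ξ⁻¹ - η - η⁻¹ = 0` of the
Laplacian on `ℤ²`: with `a = e^{iπ/4}`, `b = e^{3iπ/4}`,
`ξ = (u+a)(u+b)/((u-a)(u-b))` and `η = (u+a)(u-b)/((u-a)(u+b))` lie on the curve. -/
theorem stmt_8 (a b u ξ η : ℂ)
    (ha : a = Complex.exp (Complex.I * (Real.pi : ℂ) / 4))
    (hb : b = Complex.exp (3 * Complex.I * (Real.pi : ℂ) / 4))
    (hu1 : u ≠ a) (hu2 : u ≠ -a) (hu3 : u ≠ b) (hu4 : u ≠ -b)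
    (hξ : ξ = (u + a) * (u + b) / ((u - a) * (u - b)))
    (hη : η = (u + a) * (u - b) / ((u - a) * (u + b))) :
    ξ ≠ 0 ∧ η ≠ 0 ∧ 4 - ξ - ξ⁻¹ - η - η⁻¹ = 0 := by
  have hab : a ^ 2 + b ^ 2 = 0 := by
    rw [hb, Complex.exp_three_mul_I_mul_pi_div_four, ← ha]
    linear_combination a ^ 2 * Complex.I_sq
  change ξ = spectralXi a b u at hξ
  change η = spectralEta a b u at hη
  subst hξ hη
  exact ⟨spectralXi_ne_zero hu1 hu2 hu3 hu4, spectralEta_ne_zero hu1 hu2 hu3 hu4,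
    spectralCurve_eq_zero hu1 hu2 hu3 hu4 hab⟩
end

section
/- For z ∈ ℂ∖{0}, the number 2 − z − z⁻¹ is a positive real number if and only if either z is a negative real number, or |z| = 1 and z ≠ 1. -/
/-!
The imaginary part of `2 - z - z⁻¹` is `z.im * (1 / |z|² - 1)`, so the weight is real exactly when
`z` is real or lies on the unit circle. For real `x` it equals `-(x - 1)² / x`, positive iff
`x < 0`; on the unit circle `z⁻¹ = conj z` turns it into `2 - 2 Re z`, positive iff `z ≠ 1`.
-/

open scoped ComplexOrder

lemma Complex.exists_pos_ofReal_eq_iff (w : ℂ) : (∃ r : ℝ, 0 < r ∧ w = r) ↔ 0 < w := by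
  rw [RCLike.pos_iff_exists_ofReal]
  simp [eq_comm]

lemma Real.two_sub_sub_inv_pos_iff {x : ℝ} (hx : x ≠ 0) : 0 < 2 - x - x⁻¹ ↔ x < 0 := by
  have hsq : 2 - x - x⁻¹ = -(x - 1) ^ 2 / x := by field_simp; ring
  rw [hsq]
  constructor
  · intro hpos
    by_contra! hx'
    exact hpos.not_ge (div_nonpos_of_nonpos_of_nonneg (neg_nonpos.2 (sq_nonneg _)) hx')
  · intro hneg
    have hx1 : x - 1 ≠ 0 := by linarith
    exact div_pos_of_neg_of_neg (neg_neg_of_pos (sq_pos_of_ne_zero hx1)) hneg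

lemma Complex.im_eq_zero_or_norm_eq_one_of_im_two_sub_sub_inv {z : ℂ} (hz : z ≠ 0)
    (h : (2 - z - z⁻¹).im = 0) : z.im = 0 ∨ ‖z‖ = 1 := by
  have hn : normSq z ≠ 0 := normSq_eq_zero.not.2 hz
  have hprod : z.im * (1 - normSq z) = 0 := by
    simp only [sub_im, inv_im, im_ofNat] at h
    field_simp at h
    linear_combination h
  refine (mul_eq_zero.1 hprod).imp id fun hn1 ↦ ?_
  rw [normSq_eq_norm_sq] at hn1
  nlinarith [norm_nonneg z]

lemma Complex.two_sub_sub_inv_pos_iff_of_norm_eq_one {z : ℂ} (hz : ‖z‖ = 1) :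
    0 < 2 - z - z⁻¹ ↔ z ≠ 1 := by
  have hre : 2 - z - z⁻¹ = ((2 - 2 * z.re : ℝ) : ℂ) := by
    rw [inv_eq_conj hz, sub_sub, add_conj]; push_cast; rfl
  rw [hre, zero_lt_real, sub_pos, mul_lt_iff_lt_one_right two_pos]
  refine ⟨fun h hz1 ↦ by simp [hz1] at h, fun hne ↦ (hz ▸ re_le_norm z).lt_of_ne fun hre1 ↦ hne ?_⟩
  have him : z.im = 0 := (nonneg_iff.1 (re_eq_norm.1 (hre1.trans hz.symm))).2.symm
  exact Complex.ext hre1 him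

/-- The cycle weight `2 - z - z⁻¹` is a positive real number if and only if
`z` is a negative real number, or `|z| = 1` and `z ≠ 1`. -/
theorem stmt_11 (z : ℂ) (hz : z ≠ 0) :
    (∃ r : ℝ, 0 < r ∧ 2 - z - z⁻¹ = (r : ℂ))
      ↔ ((∃ x : ℝ, x < 0 ∧ z = (x : ℂ)) ∨ (‖z‖ = 1 ∧ z ≠ 1)) := by
  rw [Complex.exists_pos_ofReal_eq_iff]
  constructor
  · intro hpos
    rcases Complex.im_eq_zero_or_norm_eq_one_of_im_two_sub_sub_inv hz
        (Complex.pos_iff.1 hpos).2.symm with him | hnorm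
    · lift z to ℝ using him with x
      have hx : x ≠ 0 := by exact_mod_cast hz
      refine .inl ⟨x, (Real.two_sub_sub_inv_pos_iff hx).1 ?_, rfl⟩
      exact_mod_cast hpos
    · exact .inr ⟨hnorm, (Complex.two_sub_sub_inv_pos_iff_of_norm_eq_one hnorm).1 hpos⟩
  · rintro (⟨x, hx, rfl⟩ | ⟨hnorm, hne⟩)
    · exact_mod_cast (Real.two_sub_sub_inv_pos_iff hx.ne).2 hx
    · exact (Complex.two_sub_sub_inv_pos_iff_of_norm_eq_one hnorm).2 hne
end

section
/- Let m ≥ 1, let C be a nonzero real number, and let λ_1, …, λ_m be real numbers with 1 ≤ λ_1 < λ_2 < ⋯ < λ_m. For each integer n ≥ 1 define P_n(z) = Cⁿ · z^{−m} · ∏_{j=1}^m (z − λ_jⁿ)(z − λ_j^{−n}) for z ∈ ℂ∖{0}. Fix i ∈ {1,…,m} and a real number u with λ_i < u, and additionally u < λ_{i+1} in case i < m. Then lim_{n→∞} (1/n)·log|P_n(−uⁿ)| = log|C| + i·log u + ∑_{j=i+1}^m log λ_j. -/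
/-!
Since `u > 1` and all `λ_j ≥ 1`, every factor of `P_n(-uⁿ)` has constant sign, and
`|P_n(-uⁿ)| = |C|ⁿ u^{-mn} ∏_j (uⁿ + λ_jⁿ)(uⁿ + λ_j^{-n})`. Each factor `aⁿ + bⁿ` is squeezed
between `max(a, b)ⁿ` and `2 max(a, b)ⁿ`, so its `n`-th root tends to `max(a, b)`. Here
`max(u, λ_j^{-1}) = u`, while `max(u, λ_j)` is `u` for `j ≤ i` and `λ_j` for `j > i`.
-/

open BigOperators Filter Finset Real Topology

theorem tendsto_inv_mul_log_pow_add_pow {a b : ℝ} (ha : 0 ≤ a) (hb : 0 ≤ b) (hab : 0 < max a b) :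
    Tendsto (fun n : ℕ => (1 / (n : ℝ)) * log (a ^ n + b ^ n)) atTop (𝓝 (log (max a b))) := by
  wlog hba : b ≤ a generalizing a b
  · rw [max_comm]
    simpa only [add_comm] using this hb ha (by rwa [max_comm]) (le_of_not_ge hba)
  rw [max_eq_left hba] at hab ⊢
  have hupper : Tendsto (fun n : ℕ => log a + log 2 * (1 / (n : ℝ))) atTop (𝓝 (log a)) := by
    simpa using tendsto_const_nhds.add (tendsto_one_div_atTop_nhds_zero_nat.const_mul (log 2))
  refine tendsto_of_tendsto_of_tendsto_of_le_of_le' tendsto_const_nhds hupper ?_ ?_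
  all_goals
    filter_upwards [eventually_ge_atTop 1] with n hn
    have hn' : (0 : ℝ) < n := by exact_mod_cast hn
    have han : 0 < a ^ n := pow_pos hab n
  · calc log a = (1 / (n : ℝ)) * log (a ^ n) := by rw [log_pow]; field_simp
      _ ≤ (1 / (n : ℝ)) * log (a ^ n + b ^ n) := by
        gcongr
        exact le_add_of_nonneg_right (pow_nonneg hb n)
  · calc (1 / (n : ℝ)) * log (a ^ n + b ^ n) ≤ (1 / (n : ℝ)) * log (2 * a ^ n) := by
          gcongr
          linarith [pow_le_pow_left₀ hb hba n]
      _ = log a + log 2 * (1 / (n : ℝ)) := by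
        rw [log_mul two_ne_zero han.ne', log_pow]
        field_simp
        ring

theorem log_abs_mul_zpow_mul_prod_neg_sub {ι : Type*} (s : Finset ι) (lam : ι → ℝ)
    (hlam : ∀ j ∈ s, 0 ≤ lam j) {C u : ℝ} (hC : C ≠ 0) (hu : 0 < u) (k n : ℕ) :
    log |C ^ n * (-(u ^ n)) ^ (-(k : ℤ)) *
        ∏ j ∈ s, (-(u ^ n) - lam j ^ n) * (-(u ^ n) - (lam j)⁻¹ ^ n)|
      = n * log |C| - k * (n * log u)
        + ∑ j ∈ s, (log (u ^ n + lam j ^ n) + log (u ^ n + (lam j)⁻¹ ^ n)) := by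
  have hfactor : ∀ j ∈ s, 0 < (u ^ n + lam j ^ n) * (u ^ n + (lam j)⁻¹ ^ n) := by
    intro j hj
    have := hlam j hj
    positivity
  have habs : |C ^ n * (-(u ^ n)) ^ (-(k : ℤ)) *
        ∏ j ∈ s, (-(u ^ n) - lam j ^ n) * (-(u ^ n) - (lam j)⁻¹ ^ n)|
      = |C| ^ n * (u ^ n) ^ (-(k : ℤ)) *
        ∏ j ∈ s, (u ^ n + lam j ^ n) * (u ^ n + (lam j)⁻¹ ^ n) := by
    rw [abs_mul, abs_mul, abs_pow, abs_zpow, abs_neg, abs_of_pos (pow_pos hu n), abs_prod]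
    congr 1
    refine prod_congr rfl fun j hj => ?_
    rw [← abs_of_pos (hfactor j hj)]
    congr 1
    ring
  rw [habs, log_mul (by positivity) (prod_pos hfactor).ne', log_mul (by positivity) (by positivity),
    log_pow, log_zpow, log_pow, log_prod fun j hj => (hfactor j hj).ne']
  refine congrArg₂ _ (by push_cast; ring) (sum_congr rfl fun j hj => ?_)
  have := hlam j hj
  exact log_mul (by positivity) (by positivity)

theorem tendsto_inv_mul_log_pow_add_pow_add_inv {u ℓ : ℝ} (hu : 0 < u) (hℓ : 0 ≤ ℓ)
    (hinv : ℓ⁻¹ ≤ u) :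
    Tendsto (fun n : ℕ => (1 / (n : ℝ)) * log (u ^ n + ℓ ^ n)
      + (1 / (n : ℝ)) * log (u ^ n + ℓ⁻¹ ^ n)) atTop (𝓝 (log (max u ℓ) + log u)) := by
  have hmax : 0 < max u ℓ := lt_max_of_lt_left hu
  refine (tendsto_inv_mul_log_pow_add_pow hu.le hℓ hmax).add ?_
  simpa [max_eq_left hinv] using
    tendsto_inv_mul_log_pow_add_pow hu.le (inv_nonneg.2 hℓ) (lt_max_of_lt_left hu)

theorem sum_Icc_max_eq {M : Type*} [AddCommMonoid M] (g : ℝ → M) (f : ℕ → ℝ) {u : ℝ} {i m : ℕ}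
    (him : i ≤ m) (hlow : ∀ j ∈ Icc 1 i, f j ≤ u) (hhigh : ∀ j ∈ Icc (i + 1) m, u ≤ f j) :
    ∑ j ∈ Icc 1 m, g (max u (f j)) = i • g u + ∑ j ∈ Icc (i + 1) m, g (f j) := by
  have hsplit := (sum_Ioc_consecutive (fun j => g (max u (f j))) (Nat.zero_le i) him).symm
  simp only [← Icc_add_one_left_eq_Ioc, zero_add] at hsplit
  rw [hsplit, sum_congr rfl fun j hj => congrArg g (max_eq_left (hlow j hj)),
    sum_congr rfl fun j hj => congrArg g (max_eq_right (hhigh j hj)), sum_const, Nat.card_Icc,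
    Nat.add_sub_cancel]

theorem stmt_12_general (m : ℕ) (C : ℝ) (hC : C ≠ 0)
    (lam : ℕ → ℝ) (h1 : 1 ≤ lam 1) (hmono : StrictMonoOn lam (Set.Icc 1 m))
    (i : ℕ) (hi1 : 1 ≤ i) (him : i ≤ m)
    (u : ℝ) (hu : lam i < u) (hu' : i < m → u < lam (i + 1)) :
    Filter.Tendsto
      (fun n : ℕ => (1 / (n : ℝ)) *
        Real.log |C ^ n * (-(u ^ n)) ^ (-(m : ℤ)) *
          ∏ j ∈ Finset.Icc 1 m, ((-(u ^ n)) - lam j ^ n) * ((-(u ^ n)) - ((lam j)⁻¹) ^ n)|)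
      Filter.atTop
      (nhds (Real.log |C| + (i : ℝ) * Real.log u
        + ∑ j ∈ Finset.Icc (i + 1) m, Real.log (lam j))) := by
  have hle : ∀ {j k}, 1 ≤ j → j ≤ k → k ≤ m → lam j ≤ lam k := fun h1j hjk hkm =>
    hmono.monotoneOn ⟨h1j, hjk.trans hkm⟩ ⟨h1j.trans hjk, hkm⟩ hjk
  have hlam : ∀ j ∈ Icc 1 m, 1 ≤ lam j := fun j hj =>
    h1.trans (hle le_rfl (mem_Icc.1 hj).1 (mem_Icc.1 hj).2)
  have hu1 : 1 < u := (hlam i (mem_Icc.2 ⟨hi1, him⟩)).trans_lt hu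
  have hlow : ∀ j ∈ Icc 1 i, lam j ≤ u := fun j hj =>
    (hle (mem_Icc.1 hj).1 (mem_Icc.1 hj).2 him).trans hu.le
  have hhigh : ∀ j ∈ Icc (i + 1) m, u ≤ lam j := fun j hj => by
    obtain ⟨hij, hjm⟩ := mem_Icc.1 hj
    exact (hu' (by omega)).le.trans (hle (by omega) hij hjm)
  have hlim := (tendsto_const_nhds (x := log |C| - m * log u)).add <|
    tendsto_finsetSum _ fun j hj => tendsto_inv_mul_log_pow_add_pow_add_inv (u := u) (ℓ := lam j)
      (by linarith) (by linarith [hlam j hj]) ((inv_le_one_of_one_le₀ (hlam j hj)).trans hu1.le)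
  have hvalue : log |C| - m * log u + ∑ j ∈ Icc 1 m, (log (max u (lam j)) + log u)
      = log |C| + i * log u + ∑ j ∈ Icc (i + 1) m, log (lam j) := by
    rw [sum_add_distrib, sum_Icc_max_eq log lam him hlow hhigh, sum_const, Nat.card_Icc]
    simp only [nsmul_eq_mul, Nat.add_sub_cancel]
    ring
  rw [← hvalue]
  refine hlim.congr' ?_
  filter_upwards [eventually_ne_atTop 0] with n hn
  rw [log_abs_mul_zpow_mul_prod_neg_sub _ lam (fun j hj => by linarith [hlam j hj]) hC
    (by linarith) m n, mul_add, mul_sub, mul_sum]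
  field_simp

/-- Growth rate computation for the characteristic polynomials
`P_n(z) = Cⁿ z^{-m} ∏_j (z - λ_jⁿ)(z - λ_j^{-n})` of the `n`-fold quotients of a strip
graph: for `λ_i < u` (and `u < λ_{i+1}` if `i < m`),
`(1/n) log |P_n(-uⁿ)| → log|C| + i log u + ∑_{j>i} log λ_j`. -/
theorem stmt_12 (m : ℕ) (hm : 1 ≤ m) (C : ℝ) (hC : C ≠ 0)
    (lam : ℕ → ℝ) (h1 : 1 ≤ lam 1) (hmono : StrictMonoOn lam (Set.Icc 1 m))
    (i : ℕ) (hi1 : 1 ≤ i) (him : i ≤ m)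
    (u : ℝ) (hu : lam i < u) (hu' : i < m → u < lam (i + 1)) :
    Filter.Tendsto
      (fun n : ℕ => (1 / (n : ℝ)) *
        Real.log |C ^ n * (-(u ^ n)) ^ (-(m : ℤ)) *
          ∏ j ∈ Finset.Icc 1 m, ((-(u ^ n)) - lam j ^ n) * ((-(u ^ n)) - ((lam j)⁻¹) ^ n)|)
      Filter.atTop
      (nhds (Real.log |C| + (i : ℝ) * Real.log u
        + ∑ j ∈ Finset.Icc (i + 1) m, Real.log (lam j))) :=
  stmt_12_general m C hC lam h1 hmono i hi1 him u hu hu'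
end

section
/- Let n ≥ 2 and z, w ∈ ℂ∖{0}. Define the complex matrix Δ_n(z,w) indexed by pairs (x,y) with x, y ∈ ℤ/nℤ (represented by {0,…,n−1}) as follows: the diagonal entries are Δ_{(x,y),(x,y)} = 4; the horizontal off-diagonal entries are Δ_{(x,y),(x+1,y)} = −z if x = n−1 and −1 otherwise, and Δ_{(x,y),(x−1,y)} = −z⁻¹ if x = 0 and −1 otherwise; the vertical off-diagonal entries are Δ_{(x,y),(x,y+1)} = −w if y = n−1 and −1 otherwise, and Δ_{(x,y),(x,y−1)} = −w⁻¹ if y = 0 and −1 otherwise; all other entries are 0 (here x±1, y±1 are taken mod n). Then det Δ_n(z,w) = ∏_{ξ : ξⁿ = z} ∏_{η : ηⁿ = w} (4 − ξ − ξ⁻¹ − η − η⁻¹). -/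
/-!
If `ξ ^ n = z` and `η ^ n = w`, the twisted boundary conditions are exactly what makes the
monomial `(x, y) ↦ ξ ^ x * η ^ y` an eigenvector of `Δ_n(z, w)` with eigenvalue
`4 - ξ - ξ⁻¹ - η - η⁻¹`. Writing the `n` distinct `n`-th roots as `ζ ^ i * c` with `ζ` a
primitive root, these `n²` eigenvectors are the columns of the Kronecker product of two
transposed Vandermonde matrices, which is invertible; so `Δ_n(z, w)` is diagonalizable and its
determinant is the product of the eigenvalues.
-/

open Matrix

def twistedTorusLaplacian {K : Type*} [Field K] (n : ℕ) (hn : 1 < n) (z w : K) :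
    Matrix (Fin n × Fin n) (Fin n × Fin n) K := fun p q =>
  (if q = p then 4 else 0)
  + (if q.2 = p.2 ∧ q.1 = p.1 + ⟨1, hn⟩ then (if (p.1 : ℕ) = n - 1 then -z else -1) else 0)
  + (if q.2 = p.2 ∧ q.1 + ⟨1, hn⟩ = p.1 then (if (p.1 : ℕ) = 0 then -z⁻¹ else -1) else 0)
  + (if q.1 = p.1 ∧ q.2 = p.2 + ⟨1, hn⟩ then (if (p.2 : ℕ) = n - 1 then -w else -1) else 0)
  + (if q.1 = p.1 ∧ q.2 + ⟨1, hn⟩ = p.2 then (if (p.2 : ℕ) = 0 then -w⁻¹ else -1) else 0)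

theorem Matrix.det_eq_prod_of_mulVec_transpose_eq {ι R : Type*} [Fintype ι] [DecidableEq ι]
    [CommRing R] [IsDomain R] {A P : Matrix ι ι R} {d : ι → R} (hP : P.det ≠ 0)
    (h : ∀ k, A *ᵥ Pᵀ k = d k • Pᵀ k) : A.det = ∏ k, d k := by
  have hAP : A * P = P * diagonal d := by
    ext i k
    rw [mul_apply, mul_diagonal]
    simpa [mulVec, dotProduct, mul_comm] using congrFun (h k) i
  apply mul_right_cancel₀ hP
  rw [← det_mul, hAP, det_mul, det_diagonal, mul_comm]

theorem det_kronecker_vandermonde_transpose_ne_zero {K : Type*} [Field K] {n : ℕ}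
    {ξ η : Fin n → K} (hξ : Function.Injective ξ) (hη : Function.Injective η) :
    (kroneckerMap (· * ·) (vandermonde ξ)ᵀ (vandermonde η)ᵀ).det ≠ 0 := by
  rw [det_kronecker, det_transpose, det_transpose]
  exact mul_ne_zero (pow_ne_zero _ (det_vandermonde_ne_zero_iff.mpr hξ))
    (pow_ne_zero _ (det_vandermonde_ne_zero_iff.mpr hη))

section TwistedShift

/- The shift on `ℤ/nℤ` picking up the factor `z` (resp. `z⁻¹`) when it wraps around acts on the
monomial `x ↦ u ^ x` as multiplication by `u` (resp. `u⁻¹`), since `u ^ n = z`. -/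

variable {K : Type*} [Field K] {n : ℕ} {u z : K}

theorem twisted_mul_pow_succ (hn : 1 < n) (hu : u ^ n = z) (x : Fin n) :
    (if (x : ℕ) = n - 1 then -z else -1) * u ^ ((x + ⟨1, hn⟩ : Fin n) : ℕ) = -u * u ^ (x : ℕ) := by
  rw [show ((x + ⟨1, hn⟩ : Fin n) : ℕ) = (x + 1) % n from rfl]
  by_cases hx : (x : ℕ) = n - 1
  · rw [if_pos hx, hx, Nat.sub_add_cancel hn.le, Nat.mod_self, pow_zero, ← hu,
      ← Nat.sub_add_cancel hn.le, pow_succ', Nat.add_sub_cancel]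
    ring
  · rw [if_neg hx, Nat.mod_eq_of_lt (by omega), pow_succ']
    ring

theorem twisted_mul_pow_pred (hn : 1 < n) (hu0 : u ≠ 0) (hu : u ^ n = z) (x : Fin n) :
    (if (x : ℕ) = 0 then -z⁻¹ else -1) * u ^ ((x - ⟨1, hn⟩ : Fin n) : ℕ) =
      -u⁻¹ * u ^ (x : ℕ) := by
  rw [show ((x - ⟨1, hn⟩ : Fin n) : ℕ) = (n - 1 + x) % n from rfl]
  by_cases hx : (x : ℕ) = 0
  · rw [if_pos hx, hx, Nat.add_zero, Nat.mod_eq_of_lt (by omega), pow_zero, ← hu,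
      ← Nat.sub_add_cancel hn.le, pow_succ, Nat.add_sub_cancel]
    field_simp
  · obtain ⟨y, hy⟩ := Nat.exists_eq_succ_of_ne_zero hx
    rw [if_neg hx, hy, show n - 1 + (y + 1) = y + n by omega, Nat.add_mod_right,
      Nat.mod_eq_of_lt (by omega), pow_succ']
    field_simp

end TwistedShift

section Laplacian

variable {K : Type*} [Field K] {n : ℕ} (hn : 1 < n) {z w : K}

theorem twistedTorusLaplacian_mulVec_monomial {a b : K} (ha0 : a ≠ 0) (hb0 : b ≠ 0)
    (ha : a ^ n = z) (hb : b ^ n = w) :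
    twistedTorusLaplacian n hn z w *ᵥ (fun p => a ^ (p.1 : ℕ) * b ^ (p.2 : ℕ)) =
      (4 - a - a⁻¹ - b - b⁻¹) • fun p => a ^ (p.1 : ℕ) * b ^ (p.2 : ℕ) := by
  have : NeZero n := ⟨by omega⟩
  ext p
  have right : ∀ q : Fin n × Fin n, q.2 = p.2 ∧ q.1 = p.1 + ⟨1, hn⟩ ↔ q = (p.1 + ⟨1, hn⟩, p.2) :=
    fun q => by rw [Prod.ext_iff]; exact and_comm
  have left : ∀ q : Fin n × Fin n, q.2 = p.2 ∧ q.1 + ⟨1, hn⟩ = p.1 ↔ q = (p.1 - ⟨1, hn⟩, p.2) :=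
    fun q => by rw [Prod.ext_iff, ← eq_sub_iff_add_eq]; exact and_comm
  have up : ∀ q : Fin n × Fin n, q.1 = p.1 ∧ q.2 = p.2 + ⟨1, hn⟩ ↔ q = (p.1, p.2 + ⟨1, hn⟩) :=
    fun q => by rw [Prod.ext_iff]
  have down : ∀ q : Fin n × Fin n, q.1 = p.1 ∧ q.2 + ⟨1, hn⟩ = p.2 ↔ q = (p.1, p.2 - ⟨1, hn⟩) :=
    fun q => by rw [Prod.ext_iff, ← eq_sub_iff_add_eq]
  simp only [mulVec, dotProduct, twistedTorusLaplacian, right, left, up, down, add_mul,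
    ite_zero_mul, Finset.sum_add_distrib, Finset.sum_ite_eq', Finset.mem_univ, if_true,
    Pi.smul_apply, smul_eq_mul]
  linear_combination b ^ (p.2 : ℕ) * twisted_mul_pow_succ hn ha p.1
    + b ^ (p.2 : ℕ) * twisted_mul_pow_pred hn ha0 ha p.1
    + a ^ (p.1 : ℕ) * twisted_mul_pow_succ hn hb p.2
    + a ^ (p.1 : ℕ) * twisted_mul_pow_pred hn hb0 hb p.2

theorem det_twistedTorusLaplacian_of_injective {ξ η : Fin n → K}
    (hξ : Function.Injective ξ) (hη : Function.Injective η)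
    (hξ0 : ∀ i, ξ i ≠ 0) (hη0 : ∀ j, η j ≠ 0) (hξn : ∀ i, ξ i ^ n = z) (hηn : ∀ j, η j ^ n = w) :
    (twistedTorusLaplacian n hn z w).det =
      ∏ i, ∏ j, (4 - ξ i - (ξ i)⁻¹ - η j - (η j)⁻¹) := by
  rw [← Fintype.prod_prod_type']
  refine det_eq_prod_of_mulVec_transpose_eq
    (det_kronecker_vandermonde_transpose_ne_zero hξ hη) fun k => ?_
  exact twistedTorusLaplacian_mulVec_monomial hn (hξ0 k.1) (hη0 k.2) (hξn k.1) (hηn k.2)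

end Laplacian

theorem IsPrimitiveRoot.injective_pow_mul {K : Type*} [Field K] {n : ℕ} {ζ c : K}
    (hζ : IsPrimitiveRoot ζ n) (hc : c ≠ 0) : Function.Injective fun i : Fin n => ζ ^ (i : ℕ) * c :=
  fun i j h => Fin.ext (hζ.pow_inj i.isLt j.isLt (mul_right_cancel₀ hc h))

theorem IsPrimitiveRoot.pow_mul_pow {K : Type*} [Field K] {n : ℕ} {ζ : K}
    (hζ : IsPrimitiveRoot ζ n) (i : ℕ) (c : K) : (ζ ^ i * c) ^ n = c ^ n := by
  rw [mul_pow, ← pow_mul, mul_comm i n, pow_mul, hζ.pow_eq_one, one_pow, one_mul]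

theorem IsPrimitiveRoot.prod_map_nthRoots {R M : Type*} [CommRing R] [IsDomain R] [CommMonoid M]
    {n : ℕ} {ζ c z : R} (hζ : IsPrimitiveRoot ζ n) (hc : c ^ n = z) (f : R → M) :
    ((Polynomial.nthRoots n z).map f).prod = ∏ i : Fin n, f (ζ ^ (i : ℕ) * c) := by
  rw [hζ.nthRoots_eq hc, Multiset.map_map, ← Finset.range_val, ← Finset.prod_eq_multiset_prod,
    Finset.prod_range]
  rfl

theorem det_twistedTorusLaplacian {K : Type*} [Field K] {n : ℕ} (hn : 1 < n) {ζ c d z w : K}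
    (hζ : IsPrimitiveRoot ζ n) (hz : z ≠ 0) (hw : w ≠ 0) (hc : c ^ n = z) (hd : d ^ n = w) :
    (twistedTorusLaplacian n hn z w).det = ((Polynomial.nthRoots n z).map fun ξ =>
        ((Polynomial.nthRoots n w).map fun η => 4 - ξ - ξ⁻¹ - η - η⁻¹).prod).prod := by
  have hn0 : n ≠ 0 := by omega
  have hc0 : c ≠ 0 := (pow_ne_zero_iff hn0).mp (hc ▸ hz)
  have hd0 : d ≠ 0 := (pow_ne_zero_iff hn0).mp (hd ▸ hw)
  simp only [hζ.prod_map_nthRoots hc, hζ.prod_map_nthRoots hd]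
  exact det_twistedTorusLaplacian_of_injective hn
    (hζ.injective_pow_mul hc0) (hζ.injective_pow_mul hd0)
    (fun _ => mul_ne_zero (pow_ne_zero _ (hζ.ne_zero hn0)) hc0)
    (fun _ => mul_ne_zero (pow_ne_zero _ (hζ.ne_zero hn0)) hd0)
    (fun i => (hζ.pow_mul_pow i c).trans hc) (fun j => (hζ.pow_mul_pow j d).trans hd)

/-- The determinant of the Laplacian of the `n × n` torus graph `ℤ²/nℤ²` with unit
conductances, twisted by a flat line bundle with monodromies `z` (horizontal) and `w`
(vertical), equals the product of `4 - ξ - ξ⁻¹ - η - η⁻¹` over all pairs `(ξ, η)` of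
`n`-th roots of `(z, w)`. -/
theorem stmt_17 (n : ℕ) (hn : 2 ≤ n) (z w : ℂ) (hz : z ≠ 0) (hw : w ≠ 0)
    (Δ : Matrix (Fin n × Fin n) (Fin n × Fin n) ℂ)
    (hΔ : ∀ p q : Fin n × Fin n, Δ p q =
      (if q = p then 4 else 0)
      + (if q.2 = p.2 ∧ q.1 = p.1 + ⟨1, by omega⟩ then (if (p.1 : ℕ) = n - 1 then -z else -1) else 0)
      + (if q.2 = p.2 ∧ q.1 + ⟨1, by omega⟩ = p.1 then (if (p.1 : ℕ) = 0 then -z⁻¹ else -1) else 0)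
      + (if q.1 = p.1 ∧ q.2 = p.2 + ⟨1, by omega⟩ then (if (p.2 : ℕ) = n - 1 then -w else -1) else 0)
      + (if q.1 = p.1 ∧ q.2 + ⟨1, by omega⟩ = p.2 then (if (p.2 : ℕ) = 0 then -w⁻¹ else -1) else 0)) :
    Δ.det = ((Polynomial.nthRoots n z).map (fun ξ =>
        ((Polynomial.nthRoots n w).map (fun η => 4 - ξ - ξ⁻¹ - η - η⁻¹)).prod)).prod := by
  obtain ⟨c, hc⟩ := IsAlgClosed.exists_pow_nat_eq z (by omega : 0 < n)
  obtain ⟨d, hd⟩ := IsAlgClosed.exists_pow_nat_eq w (by omega : 0 < n)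
  rw [show Δ = twistedTorusLaplacian n hn z w from Matrix.ext hΔ]
  exact det_twistedTorusLaplacian hn (Complex.isPrimitiveRoot_exp n (by omega)) hz hw hc hd
end
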